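/- arXiv:2308.11882 — 9 statements merged into one kernel-verified Lean document; each statement's English description precedes it below -/
import Mathlib

section
/- (Proposition 1, multilevel form of the GPMFD scheme.) Let R be a commutative ring, q ≥ 1 an integer, A a q×q matrix over R, and let γ_1,…,γ_{q+1} ∈ R be the coefficients of the monic characteristic polynomial of A, i.e. charpoly(A) = Σ_{k=1}^{q+1} γ_k x^{k−1} with γ_{q+1} = 1. Suppose m, b : ℤ → R^q satisfy the one-step recurrence m(n+1) = A·m(n) + b(n) for all n ∈ ℤ. Then for every n ∈ ℤ the identity m(n+1) = − Σ_{k=1}^{q} γ_k · m(n+k−q) + Σ_{k=1}^{q} Σ_{l=1}^{k} γ_{q+1+l−k} · A^{l−1} · b(n−k+1) holds in R^q; in particular, its first component is the (q+1)-level macroscopic finite-difference (GPMFD) scheme on the conservative moment m_1. -/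
/-! Horner's scheme for the characteristic polynomial `χ = ∑ cₖ Xᵏ` of `A`: the quotients
`Qₖ = divX^[k] χ` satisfy `Qₖ = Qₖ₊₁ X + cₖ`, so the recurrence gives
`Qₖ(A) m(j) + Qₖ₊₁(A) b(j) = cₖ m(j) + Qₖ₊₁(A) m(j+1)`. Telescoping this for `k = 0, …, q-1`
along `j = N + k`, the first term is `χ(A) m(N) = 0` by Cayley–Hamilton and the last is
`Q_q(A) m(N+q) = m(N+q)` since `χ` is monic. The weights of the source terms are the matrices
`Qₖ₊₁(A) = ∑ₗ c_{k+1+l} Aˡ`. -/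

open Polynomial Finset
open scoped Matrix

namespace Polynomial

theorem coeff_divX_iterate {R : Type*} [Semiring R] (p : R[X]) (k i : ℕ) :
    (divX^[k] p).coeff i = p.coeff (i + k) := by
  induction k generalizing i with
  | zero => rfl
  | succ k ih => rw [Function.iterate_succ_apply', coeff_divX, ih, add_right_comm, add_assoc]

theorem natDegree_divX_iterate {R : Type*} [Semiring R] (p : R[X]) (k : ℕ) :
    (divX^[k] p).natDegree = p.natDegree - k := by
  induction k with
  | zero => rfl
  | succ k ih =>
    rw [Function.iterate_succ_apply', natDegree_divX_eq_natDegree_tsub_one, ih, Nat.sub_sub]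

theorem divX_iterate_natDegree {R : Type*} [Semiring R] (p : R[X]) :
    divX^[p.natDegree] p = C p.leadingCoeff := by
  ext i
  rw [coeff_divX_iterate, coeff_C]
  rcases Nat.eq_zero_or_pos i with rfl | hi
  · rw [zero_add, if_pos rfl, leadingCoeff]
  · rw [if_neg hi.ne', coeff_eq_zero_of_natDegree_lt (by omega)]

theorem aeval_divX_iterate {R A : Type*} [CommSemiring R] [Semiring A] [Algebra R A] (x : A)
    (p : R[X]) (k : ℕ) :
    aeval x (divX^[k] p) = ∑ i ∈ range (p.natDegree - k + 1), p.coeff (i + k) • x ^ i := by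
  simp only [aeval_eq_sum_range, natDegree_divX_iterate, coeff_divX_iterate]

end Polynomial

theorem Finset.sum_Icc_one_eq_sum_range {M : Type*} [AddCommMonoid M] (f : ℕ → M) (n : ℕ) :
    ∑ k ∈ Icc 1 n, f k = ∑ k ∈ range n, f (k + 1) := by
  rw [range_eq_Ico, sum_Ico_add' f 0 n 1, zero_add, Ico_add_one_right_eq_Icc]

section Recurrence

variable {R ι : Type*} [CommRing R] [Fintype ι] [DecidableEq ι] (A : Matrix ι ι R) {m b : ℤ → ι → R}

theorem aeval_mulVec_horner_step (hrec : ∀ n, m (n + 1) = A *ᵥ m n + b n) (Q : R[X]) (n : ℤ) :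
    aeval A Q *ᵥ m n + aeval A (divX Q) *ᵥ b n
      = Q.coeff 0 • m n + aeval A (divX Q) *ᵥ m (n + 1) := by
  nth_rw 1 [← divX_mul_X_add Q]
  rw [hrec, map_add, map_mul, aeval_X, aeval_C, Matrix.add_mulVec, ← Matrix.mulVec_mulVec,
    Matrix.mulVec_add, Algebra.algebraMap_eq_smul_one, Matrix.smul_mulVec, Matrix.one_mulVec]
  abel

theorem aeval_mulVec_horner_telescope (hrec : ∀ n, m (n + 1) = A *ᵥ m n + b n) (p : R[X])
    (N : ℤ) (d : ℕ) :
    aeval A p *ᵥ m N + ∑ k ∈ range d, aeval A (divX^[k + 1] p) *ᵥ b (N + k)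
      = ∑ k ∈ range d, p.coeff k • m (N + k) + aeval A (divX^[d] p) *ᵥ m (N + d) := by
  induction d with
  | zero => simp
  | succ d ih =>
    have step := aeval_mulVec_horner_step A hrec (divX^[d] p) (N + d)
    rw [coeff_divX_iterate, zero_add, ← Function.iterate_succ_apply' divX] at step
    rw [sum_range_succ, ← add_assoc, ih, sum_range_succ, add_assoc, step, Nat.cast_succ, add_assoc]
    abel

theorem charpoly_multistep (hrec : ∀ n, m (n + 1) = A *ᵥ m n + b n) (N : ℤ) :
    m (N + Fintype.card ι) = -∑ k ∈ range (Fintype.card ι), A.charpoly.coeff k • m (N + k)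
      + ∑ k ∈ range (Fintype.card ι), aeval A (divX^[k + 1] A.charpoly) *ᵥ b (N + k) := by
  nontriviality R
  have h := aeval_mulVec_horner_telescope A hrec A.charpoly N A.charpoly.natDegree
  rw [Matrix.aeval_self_charpoly, divX_iterate_natDegree, A.charpoly_monic.leadingCoeff, C_1,
    map_one, Matrix.one_mulVec, Matrix.zero_mulVec, zero_add, A.charpoly_natDegree_eq_dim] at h
  rw [h]
  abel

end Recurrence

theorem gpmfd_multilevel_scheme_general {R : Type*} [CommRing R] {q : ℕ}
    (A : Matrix (Fin q) (Fin q) R) (m b : ℤ → Fin q → R)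
    (hrec : ∀ n : ℤ, m (n + 1) = A.mulVec (m n) + b n) :
    ∀ n : ℤ,
      m (n + 1) =
        -(∑ k ∈ Finset.Icc 1 q, A.charpoly.coeff (k - 1) • m (n + (k : ℤ) - (q : ℤ)))
          + ∑ k ∈ Finset.Icc 1 q, ∑ l ∈ Finset.Icc 1 k,
              A.charpoly.coeff (q + 1 + l - k - 1) •
                (A ^ (l - 1)).mulVec (b (n - (k : ℤ) + 1)) := by
  intro n
  nontriviality R
  have h := charpoly_multistep A hrec (n + 1 - q)
  rw [Fintype.card_fin, sub_add_cancel] at h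
  rw [h, sum_Icc_one_eq_sum_range, sum_Icc_one_eq_sum_range]
  congr 1
  · congr 1
    refine sum_congr rfl fun k _ => ?_
    rw [Nat.add_sub_cancel]
    congr 2
    push_cast
    ring
  · rw [← sum_range_reflect]
    refine sum_congr rfl fun k hk => ?_
    rw [mem_range] at hk
    rw [aeval_divX_iterate, A.charpoly_natDegree_eq_dim, Fintype.card_fin, Matrix.sum_mulVec,
      sum_Icc_one_eq_sum_range]
    refine sum_congr (by congr 1; omega) fun i _ => ?_
    rw [Matrix.smul_mulVec, Nat.add_sub_cancel]
    congr 3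
    · omega
    · push_cast [Nat.sub_sub, show 1 + k ≤ q by omega]
      ring

/-- Proposition 1 (multilevel form of the GPMFD scheme): if `m (n+1) = A.mulVec (m n) + b n`
for all `n : ℤ`, and `γ k := charpoly(A).coeff (k-1)` are the coefficients of the monic
characteristic polynomial of `A`, then the multiple-level identity
`m (n+1) = - ∑_{k=1}^q γ_k • m (n+k-q)
          + ∑_{k=1}^q ∑_{l=1}^k γ_{q+1+l-k} • A^{l-1} ⬝ b (n-k+1)` holds. -/
theorem gpmfd_multilevel_scheme {R : Type*} [CommRing R] {q : ℕ} (hq : 1 ≤ q)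
    (A : Matrix (Fin q) (Fin q) R) (m b : ℤ → Fin q → R)
    (hrec : ∀ n : ℤ, m (n + 1) = A.mulVec (m n) + b n) :
    ∀ n : ℤ,
      m (n + 1) =
        -(∑ k ∈ Finset.Icc 1 q, A.charpoly.coeff (k - 1) • m (n + (k : ℤ) - (q : ℤ)))
          + ∑ k ∈ Finset.Icc 1 q, ∑ l ∈ Finset.Icc 1 k,
              A.charpoly.coeff (q + 1 + l - k - 1) •
                (A ^ (l - 1)).mulVec (b (n - (k : ℤ) + 1)) :=
  gpmfd_multilevel_scheme_general A m b hrec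
end

section
/- (Proposition 1, determinant/adjugate form of the GPMFD scheme.) Let R be a commutative ring, q ≥ 1, A a q×q matrix over R, and let c_i denote the coefficient of x^i in charpoly(A) for 0 ≤ i ≤ q. Define matrices C_i over R (0 ≤ i ≤ q−1) entrywise by letting (C_i)_{rs} be the coefficient of x^i in the (r,s)-entry of adj(charmatrix(A)) (each entry of this adjugate has degree ≤ q−1). Suppose m, b : ℤ → R^q satisfy m(n+1) = A·m(n) + b(n) for all n ∈ ℤ. Then for every n ∈ ℤ: Σ_{i=0}^{q} c_i · m(n+i) = Σ_{i=0}^{q−1} C_i · b(n+i) in R^q. (This is the relation det(T^1·I_q − A)·m^n = adj(T^1·I_q − A)·(B·m^{eq,n} + Δt·W·F̃^n) of the paper, with T^1 the unit time-shift operator.) -/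
open Polynomial Matrix Finset

/-!
Write `S` for the ring of `q × q` matrices over `R` and `P ∈ S[X]` for `adj(x I - A)` read as a
polynomial with matrix coefficients. The identity `adj(x I - A) (x I - A) = χ_A(x) I` becomes
`P * (X - C A) = χ_A` in `S[X]`. Let `S[X]` act on sequences `ℕ → R^q` by substituting the shift
`T` for `X`; since `X` is central, `(P * (X - C A))(T) v = P(T) ((T - A) v)` even though `S` is
not commutative. For `v k = m (n + k)` the recursion says `(T - A) v = (k ↦ b (n + k))`, and
evaluating `χ_A(T) v = P(T) ((T - A) v)` at `k = 0` is the claimed identity. The sum on the right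
stops at `q - 1` because `X - C A` is monic, so `deg P + 1 = deg χ_A ≤ q`.
-/

namespace Polynomial

variable {S M : Type*} [Ring S] [AddCommGroup M] [Module S M]

/-- `P.evalShift v` is `P(T) v` for the shift `(T v) k = v (k + 1)`. -/
def evalShift (P : S[X]) (v : ℕ → M) (k : ℕ) : M :=
  P.sum fun i a => a • v (k + i)

theorem evalShift_eq_sum_range {P : S[X]} {N : ℕ} (hP : P.degree < N) (v : ℕ → M) (k : ℕ) :
    P.evalShift v k = ∑ i ∈ range N, P.coeff i • v (k + i) := by
  rw [evalShift, Polynomial.sum_def]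
  refine sum_subset (fun i hi => ?_) (fun i _ hi => by rw [notMem_support_iff.mp hi, zero_smul])
  by_contra h
  exact mem_support_iff.mp hi ((degree_lt_iff_coeff_zero P N).mp hP i (by simpa using h))

theorem evalShift_eq_sum_range_of_natDegree_lt {P : S[X]} {N : ℕ} (hP : P.natDegree < N)
    (v : ℕ → M) (k : ℕ) : P.evalShift v k = ∑ i ∈ range N, P.coeff i • v (k + i) :=
  evalShift_eq_sum_range (degree_le_natDegree.trans_lt (Nat.cast_lt.mpr hP)) v k

theorem evalShift_sub_left (P Q : S[X]) (v : ℕ → M) :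
    (P - Q).evalShift v = P.evalShift v - Q.evalShift v := by
  funext k
  have hP : P.natDegree < max P.natDegree Q.natDegree + 1 := by omega
  have hQ : Q.natDegree < max P.natDegree Q.natDegree + 1 := by omega
  have hPQ := (natDegree_sub_le P Q).trans_lt (max_lt hP hQ)
  simp only [Pi.sub_apply, evalShift_eq_sum_range_of_natDegree_lt hP,
    evalShift_eq_sum_range_of_natDegree_lt hQ, evalShift_eq_sum_range_of_natDegree_lt hPQ,
    coeff_sub, sub_smul, sum_sub_distrib]

theorem evalShift_sub_right (P : S[X]) (v w : ℕ → M) :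
    P.evalShift (v - w) = P.evalShift v - P.evalShift w := by
  funext k
  simp only [evalShift, Polynomial.sum_def, Pi.sub_apply, smul_sub, sum_sub_distrib]

theorem evalShift_mul_X (P : S[X]) (v : ℕ → M) :
    (P * X).evalShift v = P.evalShift fun k => v (k + 1) := by
  funext k
  have hPX : (P * X).natDegree < P.natDegree + 1 + 1 := by
    have := natDegree_mul_le (p := P) (q := X)
    have := natDegree_X_le (R := S)
    omega
  rw [evalShift_eq_sum_range_of_natDegree_lt hPX,
    evalShift_eq_sum_range_of_natDegree_lt P.natDegree.lt_succ_self, sum_range_succ']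
  simp only [coeff_mul_X, coeff_mul_X_zero, zero_smul, add_zero, add_assoc]

theorem evalShift_mul_C (P : S[X]) (a : S) (v : ℕ → M) :
    (P * C a).evalShift v = P.evalShift fun k => a • v k := by
  funext k
  have hPa : (P * C a).natDegree < P.natDegree + 1 :=
    (natDegree_mul_C_le P a).trans_lt P.natDegree.lt_succ_self
  rw [evalShift_eq_sum_range_of_natDegree_lt P.natDegree.lt_succ_self,
    evalShift_eq_sum_range_of_natDegree_lt hPa]
  simp only [coeff_mul_C, mul_smul]

theorem evalShift_mul_X_sub_C (P : S[X]) (a : S) (v : ℕ → M) :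
    (P * (X - C a)).evalShift v = P.evalShift fun k => v (k + 1) - a • v k := by
  rw [mul_sub, evalShift_sub_left, evalShift_mul_X, evalShift_mul_C, ← evalShift_sub_right]
  rfl

theorem degree_lt_of_natDegree_mul_X_sub_C_le {P : S[X]} {a : S} {N : ℕ}
    (h : (P * (X - C a)).natDegree ≤ N) : P.degree < N := by
  rcases eq_or_ne P 0 with rfl | hP
  · exact WithBot.bot_lt_coe N
  have : Nontrivial S := nontrivial_iff.mp ⟨⟨P, 0, hP⟩⟩
  rw [natDegree_mul' (by simpa using hP), natDegree_X_sub_C] at h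
  exact (natDegree_lt_iff_degree_lt hP).mp (by omega)

end Polynomial

namespace Matrix

variable {n R : Type*} [Fintype n] [DecidableEq n] [CommRing R]

theorem natDegree_charpoly_le (A : Matrix n n R) : A.charpoly.natDegree ≤ Fintype.card n := by
  nontriviality R
  exact A.charpoly_natDegree_eq_dim.le

theorem coeff_matPolyEquiv (M : Matrix n n R[X]) (k : ℕ) :
    (matPolyEquiv M).coeff k = Matrix.of fun i j => (M i j).coeff k := by
  ext i j
  exact matPolyEquiv_coeff_apply M k i j

theorem matPolyEquiv_adjugate_charmatrix_mul (A : Matrix n n R) :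
    matPolyEquiv (adjugate (charmatrix A)) * (X - C A) = A.charpoly.map (algebraMap R _) := by
  rw [← matPolyEquiv_charmatrix, ← map_mul, adjugate_mul, matPolyEquiv_smul_one, charpoly]

theorem degree_matPolyEquiv_adjugate_charmatrix_lt (A : Matrix n n R) :
    (matPolyEquiv (adjugate (charmatrix A))).degree < Fintype.card n :=
  degree_lt_of_natDegree_mul_X_sub_C_le <| by
    rw [matPolyEquiv_adjugate_charmatrix_mul]
    exact natDegree_map_le.trans A.natDegree_charpoly_le

end Matrix

theorem gpmfd_det_adjugate_scheme_general {R : Type*} [CommRing R] {q : ℕ}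
    (A : Matrix (Fin q) (Fin q) R) (m b : ℤ → Fin q → R)
    (hrec : ∀ n : ℤ, m (n + 1) = A.mulVec (m n) + b n) :
    ∀ n : ℤ,
      ∑ i ∈ Finset.range (q + 1), A.charpoly.coeff i • m (n + (i : ℤ))
        = ∑ i ∈ Finset.range q,
            (Matrix.of fun r s => (((Matrix.charmatrix A).adjugate) r s).coeff i).mulVec
              (b (n + (i : ℤ))) := by
  intro n
  set P := matPolyEquiv (charmatrix A).adjugate
  set v : ℕ → Fin q → R := fun k => m (n + k)
  set w : ℕ → Fin q → R := fun k => b (n + k)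
  have hvw : (fun k => v (k + 1) - A • v k) = w := by
    funext k
    simp only [v, w, smul_eq_mulVec, Nat.cast_succ, ← add_assoc, hrec, add_sub_cancel_left]
  calc ∑ i ∈ range (q + 1), A.charpoly.coeff i • v i
      = (A.charpoly.map (algebraMap R (Matrix (Fin q) (Fin q) R))).evalShift v 0 := by
        rw [evalShift_eq_sum_range_of_natDegree_lt (N := q + 1)]
        · simp [coeff_map]
        · simpa [Nat.lt_succ_iff] using natDegree_map_le.trans A.natDegree_charpoly_le
    _ = P.evalShift w 0 := by
        rw [← matPolyEquiv_adjugate_charmatrix_mul, evalShift_mul_X_sub_C, hvw]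
    _ = ∑ i ∈ range q, P.coeff i *ᵥ w i := by
        rw [evalShift_eq_sum_range (by simpa using A.degree_matPolyEquiv_adjugate_charmatrix_lt)]
        simp
    _ = _ := by simp only [P, w, coeff_matPolyEquiv]

/-- Proposition 1 (determinant/adjugate form of the GPMFD scheme): if
`m (n+1) = A.mulVec (m n) + b n` for all `n : ℤ`, then
`∑_{i=0}^{q} c_i • m (n+i) = ∑_{i=0}^{q-1} C_i ⬝ b (n+i)`, where `c_i` is the coefficient of
`x^i` in `charpoly A` and `C_i` is the matrix of `x^i`-coefficients of the entries of
`adjugate (charmatrix A)`. -/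
theorem gpmfd_det_adjugate_scheme {R : Type*} [CommRing R] {q : ℕ} (hq : 1 ≤ q)
    (A : Matrix (Fin q) (Fin q) R) (m b : ℤ → Fin q → R)
    (hrec : ∀ n : ℤ, m (n + 1) = A.mulVec (m n) + b n) :
    ∀ n : ℤ,
      ∑ i ∈ Finset.range (q + 1), A.charpoly.coeff i • m (n + (i : ℤ))
        = ∑ i ∈ Finset.range q,
            (Matrix.of fun r s => (((Matrix.charmatrix A).adjugate) r s).coeff i).mulVec
              (b (n + (i : ℤ))) :=
  gpmfd_det_adjugate_scheme_general A m b hrec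
end

section
/- (Corollary 1: the j-th row of the macroscopic finite-difference scheme is independent of the relaxation parameter s_j.) Let R be a commutative ring, q ≥ 1, W relocated q×q matrix over R, j ∈ {1,…,q}, and let s, s′ ∈ R^q satisfy s_l = s′_l for all l ≠ j. For t ∈ R^q put A(t) := W·(I_q − diag(t)) and B(t) := W·diag(t). Then: (i) charpoly(A(s)) − ( adj(charmatrix(A(s))) · B(s)ᶜ )_{jj} = charpoly(A(s′)) − ( adj(charmatrix(A(s′))) · B(s′)ᶜ )_{jj} as polynomials in R[x]; and (ii) for every k ≠ j, ( adj(charmatrix(A(s))) · B(s)ᶜ )_{jk} = ( adj(charmatrix(A(s′))) · B(s′)ᶜ )_{jk} in R[x]. Here Xᶜ denotes a matrix over R viewed over R[x] via the constant-polynomial embedding. Consequently, for a GPMRT-LB model with diagonal relaxation matrix, the scheme obtained on the j-th conservative moment does not depend on the relaxation parameter s_j. -/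
/-!
Write `A t = W (1 - diag t)` and `B t = W diag t`, so that `x - A t = (x - W) + B t`.
Multiplying `adj (x - A t) * (x - A t) = charpoly (A t) • 1` out gives
`adj (x - A t) * (x - W) = charpoly (A t) • 1 - adj (x - A t) * B t`.
Row `j` of an adjugate only involves the columns `≠ j` of the matrix, and these columns of
`x - A t` do not involve `t j`; hence row `j` of the left-hand side, and so of the right-hand side,
is the same for `s` and `s'`. Its diagonal entry is claim (i), its other entries claim (ii).
-/

open Matrix Polynomial

namespace Matrix

variable {n α : Type*} [Fintype n] [DecidableEq n] [CommRing α]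

theorem adjugate_row_eq_of_forall_ne {M M' : Matrix n n α} {j : n}
    (h : ∀ b a, a ≠ j → M b a = M' b a) : M.adjugate j = M'.adjugate j := by
  funext i
  have hdet (N : Matrix n n α) : N.adjugate j i = (Nᵀ.updateRow j (Pi.single i 1)).det := by
    rw [← adjugate_apply, ← adjugate_transpose]; rfl
  rw [hdet, hdet]
  congr 1
  ext a b
  rcases eq_or_ne a j with rfl | ha
  · simp only [updateRow_self]
  · simp only [updateRow_ne ha, transpose_apply, h b a ha]

theorem mul_one_sub_diagonal_apply (W : Matrix n n α) (t : n → α) (b a : n) :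
    (W * (1 - diagonal t)) b a = W b a * (1 - t a) := by
  simp only [mul_sub, mul_one, sub_apply, mul_diagonal]

theorem charmatrix_mul_one_sub_diagonal (W : Matrix n n α) (t : n → α) :
    charmatrix (W * (1 - diagonal t)) = charmatrix W + (W * diagonal t).map C := by
  rw [charmatrix, charmatrix, mul_sub, mul_one, RingHom.map_sub]
  simp only [RingHom.mapMatrix_apply]
  abel

theorem adjugate_charmatrix_mul_one_sub_diagonal_mul_charmatrix (W : Matrix n n α) (t : n → α) :
    (charmatrix (W * (1 - diagonal t))).adjugate * charmatrix W
      = (W * (1 - diagonal t)).charpoly • (1 : Matrix n n α[X])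
        - (charmatrix (W * (1 - diagonal t))).adjugate * (W * diagonal t).map C := by
  rw [charpoly, ← adjugate_mul, eq_sub_iff_add_eq, ← mul_add,
    ← charmatrix_mul_one_sub_diagonal]

end Matrix

theorem scheme_independent_of_sj_general {R : Type*} [CommRing R] {q : ℕ}
    (W : Matrix (Fin q) (Fin q) R) (j : Fin q) (s s' : Fin q → R)
    (hs : ∀ l : Fin q, l ≠ j → s l = s' l) :
    ((W * (1 - Matrix.diagonal s)).charpoly
        - ((Matrix.charmatrix (W * (1 - Matrix.diagonal s))).adjugate
            * (W * Matrix.diagonal s).map Polynomial.C :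
              Matrix (Fin q) (Fin q) (Polynomial R)) j j
      = (W * (1 - Matrix.diagonal s')).charpoly
        - ((Matrix.charmatrix (W * (1 - Matrix.diagonal s'))).adjugate
            * (W * Matrix.diagonal s').map Polynomial.C :
              Matrix (Fin q) (Fin q) (Polynomial R)) j j)
    ∧ ∀ k : Fin q, k ≠ j →
        ((Matrix.charmatrix (W * (1 - Matrix.diagonal s))).adjugate
            * (W * Matrix.diagonal s).map Polynomial.C :
              Matrix (Fin q) (Fin q) (Polynomial R)) j k
          = ((Matrix.charmatrix (W * (1 - Matrix.diagonal s'))).adjugate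
            * (W * Matrix.diagonal s').map Polynomial.C :
              Matrix (Fin q) (Fin q) (Polynomial R)) j k := by
  have hadj : (charmatrix (W * (1 - diagonal s))).adjugate j
      = (charmatrix (W * (1 - diagonal s'))).adjugate j :=
    adjugate_row_eq_of_forall_ne fun b a ha => by
      rw [charmatrix_apply, charmatrix_apply, mul_one_sub_diagonal_apply,
        mul_one_sub_diagonal_apply, hs a ha]
  have hrow : ∀ k, ((charmatrix (W * (1 - diagonal s))).adjugate * charmatrix W :
        Matrix (Fin q) (Fin q) R[X]) j k
      = ((charmatrix (W * (1 - diagonal s'))).adjugate * charmatrix W :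
        Matrix (Fin q) (Fin q) R[X]) j k := by
    intro k
    rw [mul_apply, mul_apply, hadj]
  simp only [adjugate_charmatrix_mul_one_sub_diagonal_mul_charmatrix, Matrix.sub_apply, Matrix.smul_apply,
    smul_eq_mul] at hrow
  refine ⟨by simpa only [one_apply_eq, mul_one] using hrow j, fun k hk => ?_⟩
  simpa only [one_apply_ne' hk, mul_zero, zero_sub, neg_inj] using hrow k

/-- Corollary 1: the `j`-th row of the macroscopic finite-difference scheme is independent of
the relaxation parameter `s_j`. Here `A(t) = W(I - diag t)`, `B(t) = W·diag t`, and `s, s'`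
agree in every entry except possibly the `j`-th. -/
theorem scheme_independent_of_sj {R : Type*} [CommRing R] {q : ℕ} (hq : 1 ≤ q)
    (W : Matrix (Fin q) (Fin q) R) (j : Fin q) (s s' : Fin q → R)
    (hs : ∀ l : Fin q, l ≠ j → s l = s' l) :
    ((W * (1 - Matrix.diagonal s)).charpoly
        - ((Matrix.charmatrix (W * (1 - Matrix.diagonal s))).adjugate
            * (W * Matrix.diagonal s).map Polynomial.C :
              Matrix (Fin q) (Fin q) (Polynomial R)) j j
      = (W * (1 - Matrix.diagonal s')).charpoly
        - ((Matrix.charmatrix (W * (1 - Matrix.diagonal s'))).adjugate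
            * (W * Matrix.diagonal s').map Polynomial.C :
              Matrix (Fin q) (Fin q) (Polynomial R)) j j)
    ∧ ∀ k : Fin q, k ≠ j →
        ((Matrix.charmatrix (W * (1 - Matrix.diagonal s))).adjugate
            * (W * Matrix.diagonal s).map Polynomial.C :
              Matrix (Fin q) (Fin q) (Polynomial R)) j k
          = ((Matrix.charmatrix (W * (1 - Matrix.diagonal s'))).adjugate
            * (W * Matrix.diagonal s').map Polynomial.C :
              Matrix (Fin q) (Fin q) (Polynomial R)) j k :=
  scheme_independent_of_sj_general W j s s' hs
end

section
/- (Scheme on a conserved moment with the conservation absorbed into the characteristic polynomial; Eq. (above1) of the paper.) Let R be a commutative ring, q ≥ 1, A, B q×q matrices over R, and j ∈ {1,…,q}. Let m, u, g : ℤ → R^q satisfy m(n+1) = A·m(n) + B·u(n) + g(n) for all n ∈ ℤ, together with the conservation condition u(n)_j = m(n)_j for all n. Let B_j be the j-th column of B, let A′ := A + B_j·e_jᵀ, and let B′ be the matrix B with its j-th column replaced by 0. Define C_i over R (0 ≤ i ≤ q−1) entrywise as the coefficient of x^i in adj(charmatrix(A)). Then for every n ∈ ℤ: Σ_{i=0}^{q}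 coeff_i(charpoly(A′)) · m(n+i)_j = Σ_{i=0}^{q−1} ( C_i · ( B′·u(n+i) + g(n+i) ) )_j. -/
/-!
The conservation law `u(n)_j = m(n)_j` moves the `j`-th column of `B` into the dynamics:
`m(n+1) = A' m(n) + f(n)` with `f = B' u + g`. In `Matrix[X]` one has
`adj(X - A') * (X - A') = χ_{A'}(X)`; letting `X` act on sequences as the shift, the right factor
`X - A'` sends `m` to `f`, so `Σ coeff_i(χ_{A'}) m(n+i) = Σ C_i(A') f(n+i)`. Finally, row `j` of
`adj(X - A')` consists of cofactors that delete column `j`, the only column in which `X - A'`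
and `X - A` differ, so it may be computed from `A` instead of `A'`.
-/

open Polynomial Matrix Finset

namespace Polynomial

theorem coeff_eq_zero_of_natDegree_mul_X_sub_C_le {A : Type*} [Ring A] {P : A[X]} {a : A}
    {N : ℕ} (h : (P * (X - C a)).natDegree ≤ N) : P.coeff N = 0 := by
  by_contra hN
  have hP : P ≠ 0 := fun hP => hN (by simp [hP])
  have htop : (P * (X - C a)).coeff (P.natDegree + 1) ≠ 0 := by
    rw [coeff_mul_X_sub_C, coeff_eq_zero_of_natDegree_lt (Nat.lt_succ_self _), zero_mul,
      sub_zero]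
    exact mt leadingCoeff_eq_zero.mp hP
  have := le_natDegree_of_ne_zero htop
  have := le_natDegree_of_ne_zero hN
  omega

end Polynomial

namespace Matrix

variable {ι R : Type*} [Fintype ι] [DecidableEq ι] [CommRing R]

theorem sum_coeff_mul_X_sub_C_mulVec (P : (Matrix ι ι R)[X]) (M : Matrix ι ι R)
    {m f : ℤ → ι → R} (hrec : ∀ n, m (n + 1) = M *ᵥ m n + f n) {N : ℕ} (hN : P.coeff N = 0)
    (n : ℤ) :
    ∑ k ∈ range (N + 1), (P * (X - C M)).coeff k *ᵥ m (n + k)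
      = ∑ k ∈ range N, P.coeff k *ᵥ f (n + k) := by
  set G : ℕ → ι → R := fun k => (P.coeff k * M) *ᵥ m (n + k)
  have hstep : ∀ k, (P * (X - C M)).coeff (k + 1) *ᵥ m (n + (k + 1 : ℕ))
      = P.coeff k *ᵥ f (n + k) + (G k - G (k + 1)) := by
    intro k
    have hm : m (n + (k + 1 : ℕ)) = M *ᵥ m (n + k) + f (n + k) := by
      rw [Nat.cast_succ, ← add_assoc, hrec]
    calc (P * (X - C M)).coeff (k + 1) *ᵥ m (n + (k + 1 : ℕ))
        = P.coeff k *ᵥ m (n + (k + 1 : ℕ)) - G (k + 1) := by rw [coeff_mul_X_sub_C, sub_mulVec]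
      _ = P.coeff k *ᵥ f (n + k) + (G k - G (k + 1)) := by
        rw [hm, mulVec_add, mulVec_mulVec]; abel
  have hzero : (P * (X - C M)).coeff 0 *ᵥ m (n + (0 : ℕ)) = -G 0 := by
    simp [G, mul_sub, neg_mulVec]
  rw [sum_range_succ', hzero]
  simp_rw [hstep]
  rw [sum_add_distrib, sum_range_sub']
  simp [G, hN]

theorem sum_charpoly_coeff_smul_eq_sum_adjugate_mulVec (M : Matrix ι ι R) {m f : ℤ → ι → R}
    (hrec : ∀ n, m (n + 1) = M *ᵥ m n + f n) (n : ℤ) :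
    ∑ i ∈ range (Fintype.card ι + 1), M.charpoly.coeff i • m (n + i)
      = ∑ i ∈ range (Fintype.card ι),
          (of fun r s => ((charmatrix M).adjugate r s).coeff i) *ᵥ f (n + i) := by
  nontriviality R
  set P := matPolyEquiv (charmatrix M).adjugate
  have hP : P * (X - C M) = M.charpoly.map (algebraMap R (Matrix ι ι R)) := by
    rw [← matPolyEquiv_charmatrix, ← map_mul, adjugate_mul, ← matPolyEquiv_smul_one]
    rfl
  have hPcard : P.coeff (Fintype.card ι) = 0 :=
    coeff_eq_zero_of_natDegree_mul_X_sub_C_le <| by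
      rw [hP]; exact natDegree_map_le.trans (charpoly_natDegree_eq_dim M).le
  have htelescope := sum_coeff_mul_X_sub_C_mulVec P M hrec hPcard n
  rw [hP] at htelescope
  convert htelescope using 2 with i _ i _
  · rw [coeff_map, Algebra.algebraMap_eq_smul_one, smul_mulVec, one_mulVec]
  · congr 1; ext r s; simp [P]

theorem adjugate_row_eq_of_eq_off_col {α : Type*} [CommRing α] {n : ℕ}
    {M M' : Matrix (Fin (n + 1)) (Fin (n + 1)) α} {j : Fin (n + 1)}
    (h : ∀ r c, c ≠ j → M r c = M' r c) (s : Fin (n + 1)) :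
    M.adjugate j s = M'.adjugate j s := by
  rw [adjugate_fin_succ_eq_det_submatrix, adjugate_fin_succ_eq_det_submatrix]
  congr 2
  ext r c
  exact h _ _ (Fin.succAbove_ne j c)

theorem mulVec_eq_col_mulVec_add_updateCol_zero_mulVec (B : Matrix ι ι R) (j : ι)
    {u v : ι → R} (h : u j = v j) :
    B *ᵥ u = (of fun i k => if k = j then B i j else 0) *ᵥ v
      + (B.updateCol j fun _ => 0) *ᵥ u := by
  ext i
  have hcol : ((of fun i k => if k = j then B i j else 0) *ᵥ v) i = B i j * u j := by
    simp [mulVec, dotProduct, h]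
  have hrest : ((B.updateCol j fun _ => 0) *ᵥ u) i = ∑ k ∈ {j}ᶜ, B i k * u k := by
    rw [mulVec, dotProduct, Fintype.sum_eq_add_sum_compl j, updateCol_self, zero_mul, zero_add]
    exact sum_congr rfl fun k hk => by rw [updateCol_ne (by simpa using hk)]
  rw [Pi.add_apply, hcol, hrest, mulVec, dotProduct, Fintype.sum_eq_add_sum_compl j]

end Matrix

theorem conserved_moment_scheme_general {R : Type*} [CommRing R] {q : ℕ}
    (A B : Matrix (Fin q) (Fin q) R) (j : Fin q) (m u g : ℤ → Fin q → R)
    (hrec : ∀ n : ℤ, m (n + 1) = A.mulVec (m n) + B.mulVec (u n) + g n)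
    (hcons : ∀ n : ℤ, u n j = m n j) :
    ∀ n : ℤ,
      ∑ i ∈ Finset.range (q + 1),
          (A + Matrix.of fun i' k => if k = j then B i' j else 0).charpoly.coeff i
            * m (n + (i : ℤ)) j
        = ∑ i ∈ Finset.range q,
            ((Matrix.of fun r s => ((Matrix.charmatrix A).adjugate r s).coeff i).mulVec
              ((B.updateCol j fun _ => 0).mulVec (u (n + (i : ℤ))) + g (n + (i : ℤ)))) j := by
  obtain ⟨q, rfl⟩ := Nat.exists_eq_add_one_of_ne_zero j.pos.ne'
  intro n
  set E : Matrix (Fin (q + 1)) (Fin (q + 1)) R := of fun i' k => if k = j then B i' j else 0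
  set B' := B.updateCol j fun _ => 0
  have hrec' : ∀ n, m (n + 1) = (A + E) *ᵥ m n + (B' *ᵥ u n + g n) := fun n => by
    rw [hrec, mulVec_eq_col_mulVec_add_updateCol_zero_mulVec B j (hcons n), add_mulVec]
    abel
  have hrow : ∀ s, (charmatrix (A + E)).adjugate j s = (charmatrix A).adjugate j s :=
    adjugate_row_eq_of_eq_off_col fun r c hc => by simp [charmatrix_apply, E, hc]
  have hscheme := congrFun (sum_charpoly_coeff_smul_eq_sum_adjugate_mulVec (A + E) hrec' n) j
  simp only [Finset.sum_apply, Pi.smul_apply, smul_eq_mul, Fintype.card_fin] at hscheme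
  rw [hscheme]
  refine sum_congr rfl fun i _ => ?_
  simp only [mulVec, dotProduct, of_apply, hrow]

/-- Scheme on a conserved moment with the conservation absorbed into the characteristic
polynomial (Eq. (above1)): with `m (n+1) = A m(n) + B u(n) + g(n)` and `u(n)_j = m(n)_j`,
letting `A' = A + B_j·e_jᵀ` and `B'` be `B` with its `j`-th column replaced by `0`,
`∑_{i=0}^{q} coeff_i(charpoly A') · m(n+i)_j
   = ∑_{i=0}^{q-1} ( C_i · (B'·u(n+i) + g(n+i)) )_j`,
where `C_i` is the matrix of `x^i`-coefficients of the entries of `adj(charmatrix A)`. -/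
theorem conserved_moment_scheme {R : Type*} [CommRing R] {q : ℕ} (hq : 1 ≤ q)
    (A B : Matrix (Fin q) (Fin q) R) (j : Fin q) (m u g : ℤ → Fin q → R)
    (hrec : ∀ n : ℤ, m (n + 1) = A.mulVec (m n) + B.mulVec (u n) + g n)
    (hcons : ∀ n : ℤ, u n j = m n j) :
    ∀ n : ℤ,
      ∑ i ∈ Finset.range (q + 1),
          (A + Matrix.of fun i' k => if k = j then B i' j else 0).charpoly.coeff i
            * m (n + (i : ℤ)) j
        = ∑ i ∈ Finset.range q,
            ((Matrix.of fun r s => ((Matrix.charmatrix A).adjugate r s).coeff i).mulVec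
              ((B.updateCol j fun _ => 0).mulVec (u (n + (i : ℤ))) + g (n + (i : ℤ)))) j :=
  conserved_moment_scheme_general A B j m u g hrec hcons
end

section
/- (Proposition 2, multilevel sum form of the GPMFD scheme on the j-th of N conservative moments.) Let R be a commutative ring, q ≥ 1, 1 ≤ N ≤ q, j ∈ {1,…,N}, A a q×q matrix over R, P_j := Σ_{l ∈ {j} ∪ {N+1,…,q}} e_l·e_lᵀ, Ã_j := A·P_j, Ā_j := A − Ã_j. Define γ_{j,k} for k = 1,…,q+2−N as the coefficient of x^{k+N−2} in charpoly(Ã_j); since Ã_j has zero columns at all indices in {1,…,N}\{j} (N−1 zero columns), one indeed has charpoly(Ã_j) = Σ_{k=1}^{q+2−N} γ_{j,k}·x^{k+N−2}, and γ_{j,q+2−N} = 1. Suppose m, b : ℤ → R^q satisfy m(n+1) = A·m(n) + b(n) for all n ∈ ℤ. Then for every n ∈ ℤ: m(n+1)_j = − Σ_{k=1}^{q+1−N} γ_{j,k} · m(n+N+k−1−q)_j + Σ_{k=1}^{q+1−N} Σ_{l=1}^{k} γ_{j,q+2−N+l−k} · ( Ã_j^{l−1} · ( Ā_j·m(n−k+1)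 + b(n−k+1) ) )_j. -/
/-!
The matrix `Ã_j = A P_j` vanishes on the `N - 1` columns outside `S = {j} ∪ {N, …, q-1}`
(0-based), so its characteristic polynomial is `X ^ (N - 1) * χ`, where `χ` is the characteristic
polynomial of the `S × S` block `D` of `Ã_j`, and the `S`-coordinates of `Ã_j ^ k v` are those of
`D ^ k (v|_S)`. Cayley–Hamilton for `D` therefore gives `∑ₖ γ_{j,k+1} (Ã_j ^ k v)_j = 0` for
every `v`. Writing the scheme as `m(n+1) = Ã_j m(n) + (Ā_j m(n) + b(n))` and unrolling it from
time `n + 1 - (q + 1 - N)`, this identity cancels every contribution of the initial value; solving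
for the top term, whose coefficient `γ_{j,q+2-N}` is `1`, gives the formula.
-/

/-- The projection matrix `P_j = ∑_{l ∈ {j} ∪ {N+1,…,q}} e_l e_lᵀ` (0-based: the diagonal
0/1 matrix selecting the `j`-th coordinate and the coordinates of index `≥ N`). -/
def gpmfdProj (R : Type*) [CommRing R] {q : ℕ} (N : ℕ) (j : Fin q) :
    Matrix (Fin q) (Fin q) R :=
  Matrix.diagonal fun l : Fin q => if l = j ∨ N ≤ (l : ℕ) then 1 else 0

open Matrix Polynomial Finset

theorem Finset.sum_range_sum_range_eq_sum_Icc_sum_Icc {M : Type*} [AddCommMonoid M] (L : ℕ)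
    (h : ℕ → ℕ → M) :
    ∑ k ∈ range (L + 1), ∑ i ∈ range k, h k i =
      ∑ k ∈ Icc 1 L, ∑ l ∈ Icc 1 k, h (L + l - k) (l - 1) := by
  rw [sum_sigma', sum_sigma']
  refine sum_nbij' (fun x => ⟨L + 1 + x.2 - x.1, x.2 + 1⟩) (fun y => ⟨L + y.2 - y.1, y.2 - 1⟩)
    ?_ ?_ ?_ ?_ ?_ <;> rintro ⟨k, i⟩ <;> simp only [mem_sigma, mem_range, mem_Icc]
  all_goals first | omega | (intro; congr 2 <;> omega)

namespace Matrix

variable {R ι : Type*} [CommRing R] [Fintype ι] {p : ι → Prop} [DecidablePred p]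
  {M : Matrix ι ι R}

theorem mulVec_comp_val_of_apply_eq_zero (hM : ∀ i c, ¬ p c → M i c = 0) (v : ι → R) :
    (M *ᵥ v) ∘ Subtype.val = M.toSquareBlockProp p *ᵥ (v ∘ Subtype.val) := by
  funext s
  simp only [Function.comp_apply, mulVec, dotProduct, toSquareBlockProp_def, of_apply]
  rw [← Fintype.sum_subtype_add_sum_subtype p,
    Fintype.sum_eq_zero (fun c : {c // ¬ p c} => M s c * v c) fun c => by
      rw [hM _ _ c.2, zero_mul],
    add_zero]

theorem pow_mulVec_comp_val_of_apply_eq_zero [DecidableEq ι] (hM : ∀ i c, ¬ p c → M i c = 0)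
    (k : ℕ) (v : ι → R) :
    (M ^ k *ᵥ v) ∘ Subtype.val = M.toSquareBlockProp p ^ k *ᵥ (v ∘ Subtype.val) := by
  induction k with
  | zero => simp
  | succ k ih =>
    rw [pow_succ', ← mulVec_mulVec, mulVec_comp_val_of_apply_eq_zero hM, ih, mulVec_mulVec,
      ← pow_succ']

theorem aeval_mulVec_comp_val_of_apply_eq_zero [DecidableEq ι] (hM : ∀ i c, ¬ p c → M i c = 0)
    (f : R[X]) (v : ι → R) :
    (aeval M f *ᵥ v) ∘ Subtype.val = aeval (M.toSquareBlockProp p) f *ᵥ (v ∘ Subtype.val) := by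
  induction f using Polynomial.induction_on' with
  | add f g hf hg => rw [map_add, map_add, add_mulVec, add_mulVec, ← hf, ← hg]; rfl
  | monomial k a =>
    simp only [aeval_monomial, ← Algebra.smul_def, smul_mulVec,
      ← pow_mulVec_comp_val_of_apply_eq_zero hM]
    rfl

theorem aeval_charpoly_toSquareBlockProp_mulVec_apply [DecidableEq ι]
    (hM : ∀ i c, ¬ p c → M i c = 0) (v : ι → R) {s : ι} (hs : p s) :
    (aeval M (M.toSquareBlockProp p).charpoly *ᵥ v) s = 0 := by
  have := congrFun (aeval_mulVec_comp_val_of_apply_eq_zero hM (M.toSquareBlockProp p).charpoly v)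
    ⟨s, hs⟩
  rwa [aeval_self_charpoly, zero_mulVec] at this

theorem charpoly_eq_X_pow_mul_charpoly_toSquareBlockProp [DecidableEq ι]
    (hM : ∀ i c, ¬ p c → M i c = 0) :
    M.charpoly = X ^ Fintype.card {c // ¬ p c} * (M.toSquareBlockProp p).charpoly := by
  let e : {c // ¬ p c} ⊕ {c // p c} ≃ ι := (Equiv.sumComm _ _).trans (Equiv.sumCompl p)
  have hblocks : reindex e.symm e.symm M =
      fromBlocks 0 (M.submatrix Subtype.val Subtype.val) 0 (M.toSquareBlockProp p) := by
    ext (s | s) (c | c)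
    all_goals first | rfl | exact hM _ _ c.2
  rw [← charpoly_reindex e.symm, hblocks, charpoly_fromBlocks_zero₂₁, charpoly_zero]

variable [DecidableEq ι] {m d : ℤ → ι → R}

theorem recurrence_add_eq_pow_mulVec_add_sum (hrec : ∀ t, m (t + 1) = M *ᵥ m t + d t) (s : ℕ)
    (t : ℤ) : m (t + s) = M ^ s *ᵥ m t + ∑ i ∈ range s, M ^ i *ᵥ d (t + s - 1 - i) := by
  induction s with
  | zero => simp
  | succ s ih =>
    rw [Nat.cast_succ, ← add_assoc, hrec, ih, mulVec_add, mulVec_mulVec, ← pow_succ', mulVec_sum,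
      sum_range_succ' _ s, pow_zero, one_mulVec]
    simp only [mulVec_mulVec, ← pow_succ', Nat.cast_succ, Nat.cast_zero]
    ring_nf

theorem recurrence_sum_coeff_mul_apply_eq_sum_sum
    (hrec : ∀ t, m (t + 1) = M *ᵥ m t + d t) {c : ℕ → R} {L : ℕ} {j : ι}
    (hc : ∀ v, ∑ k ∈ range (L + 1), c k * (M ^ k *ᵥ v) j = 0) (t : ℤ) :
    ∑ k ∈ range (L + 1), c k * m (t + k) j =
      ∑ k ∈ range (L + 1), ∑ i ∈ range k, c k * (M ^ i *ᵥ d (t + k - 1 - i)) j := by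
  simp only [recurrence_add_eq_pow_mulVec_add_sum hrec, Pi.add_apply, mul_add, sum_add_distrib,
    hc, zero_add, Finset.sum_apply, mul_sum]

theorem recurrence_apply_succ_eq (hrec : ∀ t, m (t + 1) = M *ᵥ m t + d t) {γ : ℕ → R}
    {L : ℕ} {j : ι} (hγ : ∀ v, ∑ k ∈ range (L + 1), γ (k + 1) * (M ^ k *ᵥ v) j = 0)
    (htop : γ (L + 1) = 1) (n : ℤ) :
    m (n + 1) j = -∑ k ∈ Icc 1 L, γ k * m (n + k - L) j +
      ∑ k ∈ Icc 1 L, ∑ l ∈ Icc 1 k, γ (L + 1 + l - k) * (M ^ (l - 1) *ᵥ d (n - k + 1)) j := by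
  have key := recurrence_sum_coeff_mul_apply_eq_sum_sum hrec hγ (n + 1 - L)
  rw [sum_range_succ, htop, one_mul, sum_range_sum_range_eq_sum_Icc_sum_Icc] at key
  have hlow : ∑ k ∈ range L, γ (k + 1) * m (n + 1 - L + k) j =
      ∑ k ∈ Icc 1 L, γ k * m (n + k - L) j := by
    refine sum_nbij' (· + 1) (· - 1) ?_ ?_ ?_ ?_ ?_ <;> intro k <;>
      simp only [mem_range, mem_Icc]
    all_goals first | omega | (intro; push_cast; ring_nf)
  have hhigh : ∀ k ∈ Icc 1 L, ∀ l ∈ Icc 1 k,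
      γ (L + l - k + 1) * (M ^ (l - 1) *ᵥ d (n + 1 - L + ↑(L + l - k) - 1 - ↑(l - 1))) j =
        γ (L + 1 + l - k) * (M ^ (l - 1) *ᵥ d (n - k + 1)) j := by
    intro k hk l hl
    rw [mem_Icc] at hk hl
    congr 4 <;> omega
  rw [hlow, sub_add_cancel, sum_congr rfl fun k hk => sum_congr rfl (hhigh k hk)] at key
  linear_combination key

end Matrix

section

variable {R : Type*} [CommRing R] {q N : ℕ} {j : Fin q}

theorem mul_gpmfdProj_apply_eq_zero (A : Matrix (Fin q) (Fin q) R) {c : Fin q}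
    (hc : ¬(c = j ∨ N ≤ (c : ℕ))) (i : Fin q) : (A * gpmfdProj R N j) i c = 0 := by
  simp [gpmfdProj, mul_diagonal, hc]

theorem Fin.card_subtype_not_eq_or_le (hNq : N ≤ q) (hj : (j : ℕ) < N) :
    Fintype.card {c : Fin q // ¬(c = j ∨ N ≤ (c : ℕ))} = N - 1 := by
  have hfilter : (univ.filter fun c : Fin q => ¬(c = j ∨ N ≤ (c : ℕ))) =
      (univ.filter fun c : Fin q => (c : ℕ) < N).erase j := by
    ext c
    simp only [mem_filter, mem_univ, true_and, mem_erase]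
    omega
  rw [Fintype.card_subtype, hfilter, card_erase_of_mem (by simpa), Fin.card_filter_val_lt,
    min_eq_right hNq]

theorem sum_coeff_charpoly_mul_gpmfdProj_pow_mulVec_eq_zero (hNq : N ≤ q) (hj : (j : ℕ) < N)
    (A : Matrix (Fin q) (Fin q) R) (v : Fin q → R) :
    ∑ k ∈ range (q + 1 - N + 1), (A * gpmfdProj R N j).charpoly.coeff (k + 1 + N - 2) *
      ((A * gpmfdProj R N j) ^ k *ᵥ v) j = 0 := by
  nontriviality R
  set M := A * gpmfdProj R N j
  have hM : ∀ i c, ¬(c = j ∨ N ≤ (c : ℕ)) → M i c = 0 := fun i c hc =>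
    mul_gpmfdProj_apply_eq_zero A hc i
  set f := (M.toSquareBlockProp fun c => c = j ∨ N ≤ (c : ℕ)).charpoly
  have hcard := Fin.card_subtype_not_eq_or_le hNq hj
  have hdeg : f.natDegree < q + 1 - N + 1 := by
    have hcompl := Fintype.card_subtype_compl (fun c : Fin q => c = j ∨ N ≤ (c : ℕ))
    have hle := Fintype.card_subtype_le (fun c : Fin q => c = j ∨ N ≤ (c : ℕ))
    rw [Fintype.card_fin] at hcompl hle
    rw [charpoly_natDegree_eq_dim]
    omega
  have hcoeff : ∀ k, M.charpoly.coeff (k + 1 + N - 2) = f.coeff k := fun k => by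
    rw [charpoly_eq_X_pow_mul_charpoly_toSquareBlockProp hM, hcard,
      show k + 1 + N - 2 = k + (N - 1) by omega, coeff_X_pow_mul]
  have hCH := aeval_charpoly_toSquareBlockProp_mulVec_apply hM v (Or.inl rfl)
  rw [aeval_eq_sum_range' hdeg, sum_mulVec, Finset.sum_apply] at hCH
  simpa only [hcoeff, smul_mulVec, Pi.smul_apply, smul_eq_mul] using hCH

end

theorem gpmfd_multilevel_scheme_N_conserved_general {R : Type*} [CommRing R] {q N : ℕ}
    (hNq : N ≤ q) (j : Fin q) (hj : (j : ℕ) < N)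
    (A : Matrix (Fin q) (Fin q) R) (m b : ℤ → Fin q → R)
    (hrec : ∀ n : ℤ, m (n + 1) = A.mulVec (m n) + b n) :
    ∀ n : ℤ,
      m (n + 1) j
        = -(∑ k ∈ Finset.Icc 1 (q + 1 - N),
              (A * gpmfdProj R N j).charpoly.coeff (k + N - 2)
                * m (n + (N : ℤ) + (k : ℤ) - 1 - (q : ℤ)) j)
          + ∑ k ∈ Finset.Icc 1 (q + 1 - N), ∑ l ∈ Finset.Icc 1 k,
              (A * gpmfdProj R N j).charpoly.coeff ((q + 2 - N + l - k) + N - 2)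
                * (((A * gpmfdProj R N j) ^ (l - 1)).mulVec
                    ((A - A * gpmfdProj R N j).mulVec (m (n - (k : ℤ) + 1))
                      + b (n - (k : ℤ) + 1))) j := by
  intro n
  set M := A * gpmfdProj R N j
  have hstep : ∀ t, m (t + 1) = M *ᵥ m t + ((A - M) *ᵥ m t + b t) := fun t => by
    rw [hrec, sub_mulVec]
    abel
  have htop : M.charpoly.coeff (q + 1 - N + 1 + N - 2) = 1 := by
    nontriviality R
    rw [show q + 1 - N + 1 + N - 2 = M.charpoly.natDegree by simp; omega]
    exact (charpoly_monic M).coeff_natDegree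
  have key := recurrence_apply_succ_eq hstep (γ := fun k => M.charpoly.coeff (k + N - 2))
    (sum_coeff_charpoly_mul_gpmfdProj_pow_mulVec_eq_zero hNq hj A) htop n
  rw [show q + 2 - N = q + 1 - N + 1 by omega]
  convert key using 4 with k
  rw [show n + N + k - 1 - q = n + k - ((q + 1 - N : ℕ) : ℤ) by omega]

/-- Proposition 2 (multilevel sum form of the GPMFD scheme on the `j`-th of `N` conservative
moments): with `Ã_j = A·P_j`, `Ā_j = A - Ã_j`, `γ_{j,k} = coeff_{k+N-2}(charpoly Ã_j)`, and
`m (n+1) = A m(n) + b(n)`, one has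
`m(n+1)_j = - ∑_{k=1}^{q+1-N} γ_{j,k} m(n+N+k-1-q)_j
  + ∑_{k=1}^{q+1-N} ∑_{l=1}^{k} γ_{j,q+2-N+l-k} (Ã_j^{l-1}·(Ā_j·m(n-k+1)+b(n-k+1)))_j`. -/
theorem gpmfd_multilevel_scheme_N_conserved {R : Type*} [CommRing R] {q N : ℕ}
    (hq : 1 ≤ q) (hN1 : 1 ≤ N) (hNq : N ≤ q) (j : Fin q) (hj : (j : ℕ) < N)
    (A : Matrix (Fin q) (Fin q) R) (m b : ℤ → Fin q → R)
    (hrec : ∀ n : ℤ, m (n + 1) = A.mulVec (m n) + b n) :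
    ∀ n : ℤ,
      m (n + 1) j
        = -(∑ k ∈ Finset.Icc 1 (q + 1 - N),
              (A * gpmfdProj R N j).charpoly.coeff (k + N - 2)
                * m (n + (N : ℤ) + (k : ℤ) - 1 - (q : ℤ)) j)
          + ∑ k ∈ Finset.Icc 1 (q + 1 - N), ∑ l ∈ Finset.Icc 1 k,
              (A * gpmfdProj R N j).charpoly.coeff ((q + 2 - N + l - k) + N - 2)
                * (((A * gpmfdProj R N j) ^ (l - 1)).mulVec
                    ((A - A * gpmfdProj R N j).mulVec (m (n - (k : ℤ) + 1))
                      + b (n - (k : ℤ) + 1))) j :=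
  gpmfd_multilevel_scheme_N_conserved_general hNq j hj A m b hrec
end

section
/- (Proposition 3, reduced multilevel GPMFD scheme.) Let R be a commutative ring, q = N + r with N ≥ 1 and r ≥ 0, W a q×q matrix over R, S_r an r×r matrix over R, Ŝ the block-diagonal q×q matrix with blocks I_N and S_r, and A := W·(I_q − Ŝ). Let γ_k denote the coefficient of x^{k−1} in charpoly(A) for k = 1,…,q+1 (γ_{q+1} = 1). Suppose m, b : ℤ → R^q satisfy m(n+1) = A·m(n) + b(n) for all n ∈ ℤ. Then for every j ∈ {1,…,N} and every n ∈ ℤ: m(n+1)_j = − Σ_{k=N}^{q} γ_k · m(n+k−q)_j + Σ_{k=N}^{q} Σ_{l=N}^{k} γ_{q+1+l−k} · ( A^{l−N} · b(n−k+N) )_j; in fact the corresponding vector identity holds in every component. This is the (q+2−N)-level finite-difference scheme on the conservative moments of the GPMRT-LB model whose relaxation matrix fixes the first N moments. -/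
/-!
Since `1 - Ŝ` vanishes on the first `N` coordinates, `A = W (1 - Ŝ)` factors as `A = K P` through
`R^r`. With `C = P K`, the rectangular Sylvester identity gives `charpoly A = X^N · charpoly C`,
and `A · χ_C(A) = K χ_C(C) P = 0` by Cayley–Hamilton for `C`. So `p = X · χ_C = charpoly A / X^(N-1)`
is a monic annihilating polynomial of `A` of degree `r + 1` whose coefficients are the `γ_k` with
`k ≥ N`. For any monic `p` with `p(A) = 0`, unrolling the recurrence
`m(s + j) = A^j m(s) + ∑_{i<j} A^i b(s + j - 1 - i)` and summing against the coefficients of `p`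
makes the `m(s)` term `p(A) m(s)` vanish, which leaves a `(deg p + 1)`-level scheme.
-/

open Matrix Polynomial Finset

theorem Finset.sum_Icc_add_eq_sum_range {M : Type*} [AddCommMonoid M] (f : ℕ → M) (a n : ℕ) :
    ∑ k ∈ Icc a (a + n), f k = ∑ j ∈ range (n + 1), f (a + j) := by
  rw [← Ico_add_one_right_eq_Icc, sum_Ico_eq_sum_range, add_assoc, Nat.add_sub_cancel_left]

theorem Finset.sum_range_succ_sum_range_eq_sum_range_sum_range {M : Type*} [AddCommMonoid M]
    (d : ℕ) (f : ℕ → ℕ → M) :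
    ∑ j ∈ range (d + 1), ∑ i ∈ range j, f j i =
      ∑ j ∈ range d, ∑ i ∈ range (j + 1), f (d + i - j) i := by
  rw [sum_sigma', sum_sigma']
  refine sum_nbij' (fun x ↦ ⟨d + x.2 - x.1, x.2⟩) (fun x ↦ ⟨d + x.2 - x.1, x.2⟩)
    ?_ ?_ ?_ ?_ ?_ <;>
  simp only [mem_range, Sigma.forall, mem_sigma, Sigma.mk.injEq, heq_eq_eq] <;> grind

section Recurrence

variable {R ι : Type*} [CommRing R] [Fintype ι] [DecidableEq ι] {A : Matrix ι ι R}
  {m b : ℤ → ι → R}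

theorem eq_pow_mulVec_add_sum_of_recurrence (hrec : ∀ n, m (n + 1) = A *ᵥ m n + b n)
    (s : ℤ) (j : ℕ) :
    m (s + j) = (A ^ j) *ᵥ m s + ∑ i ∈ range j, (A ^ i) *ᵥ b (s + j - 1 - i) := by
  induction j with
  | zero => simp
  | succ j ih =>
    rw [Nat.cast_succ, ← add_assoc, hrec, ih, sum_range_succ', mulVec_add, mulVec_mulVec,
      ← pow_succ', mulVec_sum]
    simp only [mulVec_mulVec, ← pow_succ', Nat.cast_succ, pow_zero, one_mulVec, add_assoc]
    congr 3
    · ext i : 1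
      ring_nf
    · ring

theorem sum_coeff_smul_eq_aeval_mulVec_add (hrec : ∀ n, m (n + 1) = A *ᵥ m n + b n)
    {p : R[X]} {d : ℕ} (hd : p.natDegree ≤ d) (s : ℤ) :
    ∑ j ∈ range (d + 1), p.coeff j • m (s + j) = aeval A p *ᵥ m s +
      ∑ j ∈ range (d + 1), ∑ i ∈ range j, p.coeff j • (A ^ i) *ᵥ b (s + j - 1 - i) := by
  simp_rw [aeval_eq_sum_range' (Nat.lt_succ_of_le hd), sum_mulVec,
    eq_pow_mulVec_add_sum_of_recurrence hrec s, smul_add, sum_add_distrib, smul_mulVec,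
    smul_sum]

theorem recurrence_multilevel_scheme (hrec : ∀ n, m (n + 1) = A *ᵥ m n + b n)
    {p : R[X]} (hp : p.Monic) {d : ℕ} (hd : p.natDegree = d) (hA : aeval A p = 0) (s : ℤ) :
    m (s + d) = -∑ j ∈ range d, p.coeff j • m (s + j) +
      ∑ j ∈ range d, ∑ i ∈ range (j + 1), p.coeff (d + i - j) • (A ^ i) *ᵥ b (s + d - 1 - j) := by
  have h := sum_coeff_smul_eq_aeval_mulVec_add hrec hd.le s
  rw [sum_range_succ, ← hd, hp.coeff_natDegree, one_smul, hd, hA, zero_mulVec, zero_add,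
    sum_range_succ_sum_range_eq_sum_range_sum_range] at h
  rw [eq_neg_add_iff_add_eq, h]
  refine sum_congr rfl fun j hj => sum_congr rfl fun i hi => ?_
  rw [mem_range] at hj hi
  congr 3
  push_cast [show j ≤ d + i by omega]
  ring

theorem recurrence_multilevel_scheme_of_eq_X_pow_mul (hrec : ∀ n, m (n + 1) = A *ᵥ m n + b n)
    {N r : ℕ} {p Q : R[X]} (hp : p.Monic) (hd : p.natDegree = r + 1) (hA : aeval A p = 0)
    (hN : 1 ≤ N) (hQ : Q = X ^ (N - 1) * p) (n : ℤ) :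
    m (n + 1) =
      -(∑ k ∈ Icc N (N + r), Q.coeff (k - 1) • m (n + (k : ℤ) - ((N + r : ℕ) : ℤ))) +
        ∑ k ∈ Icc N (N + r), ∑ l ∈ Icc N k,
          Q.coeff (N + r + 1 + l - k - 1) • (A ^ (l - N)) *ᵥ b (n - (k : ℤ) + (N : ℤ)) := by
  have hcoeff (j : ℕ) : Q.coeff (j + (N - 1)) = p.coeff j := by rw [hQ, coeff_X_pow_mul]
  rw [sum_Icc_add_eq_sum_range, sum_Icc_add_eq_sum_range]
  convert recurrence_multilevel_scheme hrec hp hd hA (n - r) using 2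
  · push_cast; ring
  · refine congrArg _ (sum_congr rfl fun j _ => ?_)
    rw [← hcoeff]
    congr 2
    · omega
    · push_cast; ring
  · refine sum_congr rfl fun j hj => ?_
    rw [sum_Icc_add_eq_sum_range]
    refine sum_congr rfl fun i hi => ?_
    rw [mem_range] at hj hi
    rw [← hcoeff]
    congr 3
    · omega
    · omega
    · push_cast; ring

end Recurrence

namespace Matrix

variable {R m n : Type*} [CommRing R] [Fintype m] [DecidableEq m] [Fintype n] [DecidableEq n]

theorem aeval_mul_mul_eq_mul_aeval_mul (K : Matrix m n R) (P : Matrix n m R) (p : R[X]) :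
    aeval (K * P) p * K = K * aeval (P * K) p := by
  have hpow : ∀ k : ℕ, (K * P) ^ k * K = K * (P * K) ^ k := by
    intro k
    induction k with
    | zero => simp
    | succ k ih =>
      rw [pow_succ', Matrix.mul_assoc, ih, pow_succ']
      simp only [Matrix.mul_assoc]
  induction p using Polynomial.induction_on' with
  | add p q hp hq => rw [map_add, map_add, Matrix.add_mul, Matrix.mul_add, hp, hq]
  | monomial k c =>
    simp only [aeval_monomial, Algebra.algebraMap_eq_smul_one, smul_mul, one_mul,
      Matrix.smul_mul, Matrix.mul_smul, hpow]

theorem aeval_mul_X_mul_charpoly_mul_eq_zero (K : Matrix m n R) (P : Matrix n m R) :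
    aeval (K * P) (X * (P * K).charpoly) = 0 := by
  rw [mul_comm, map_mul, aeval_X, ← Matrix.mul_assoc, aeval_mul_mul_eq_mul_aeval_mul,
    aeval_self_charpoly, Matrix.mul_zero, Matrix.zero_mul]

theorem charpoly_mul_eq_X_pow_mul_X_mul_charpoly (K : Matrix m n R) (P : Matrix n m R) {e : ℕ}
    (he : Fintype.card m = Fintype.card n + e + 1) :
    (K * P).charpoly = X ^ e * (X * (P * K).charpoly) := by
  rw [charpoly_mul_comm_of_le _ _ (by omega), ← mul_assoc, ← pow_succ, he]
  congr 2
  omega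

theorem mul_one_sub_fromBlocks_one_zero_zero {p q : Type*} [Fintype p] [DecidableEq p]
    [Fintype q] [DecidableEq q] (W : Matrix (p ⊕ q) (p ⊕ q) R) (S : Matrix q q R) :
    W * (1 - fromBlocks 1 0 0 S) =
      (W * fromRows (0 : Matrix p q R) (1 - S)) *
        fromCols (0 : Matrix q p R) (1 : Matrix q q R) := by
  rw [Matrix.mul_assoc, fromRows_mul_fromCols, ← fromBlocks_one, sub_eq_add_neg, fromBlocks_neg,
    fromBlocks_add]
  simp [sub_eq_add_neg]

end Matrix

/-- Proposition 3 (reduced multilevel GPMFD scheme): with `q = N + r`, `Ŝ` block-diagonal with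
blocks `I_N` and `S_r`, `A = W(I - Ŝ)`, `γ_k = coeff_{k-1}(charpoly A)`, and
`m (n+1) = A m(n) + b(n)`, for every `n`:
`m(n+1) = - ∑_{k=N}^{q} γ_k • m(n+k-q)
          + ∑_{k=N}^{q} ∑_{l=N}^{k} γ_{q+1+l-k} • A^{l-N} ⬝ b(n-k+N)`
(a vector identity, holding in every component, in particular on each of the first `N`
(conservative) components). -/
theorem gpmfd_reduced_multilevel_scheme {R : Type*} [CommRing R] {N r : ℕ} (hN : 1 ≤ N)
    (W : Matrix (Fin N ⊕ Fin r) (Fin N ⊕ Fin r) R) (Sr : Matrix (Fin r) (Fin r) R)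
    (A : Matrix (Fin N ⊕ Fin r) (Fin N ⊕ Fin r) R)
    (hA : A = W * (1 - Matrix.fromBlocks 1 0 0 Sr))
    (m b : ℤ → (Fin N ⊕ Fin r) → R)
    (hrec : ∀ n : ℤ, m (n + 1) = A.mulVec (m n) + b n) :
    ∀ n : ℤ,
      m (n + 1)
        = -(∑ k ∈ Finset.Icc N (N + r),
              A.charpoly.coeff (k - 1) • m (n + (k : ℤ) - ((N + r : ℕ) : ℤ)))
          + ∑ k ∈ Finset.Icc N (N + r), ∑ l ∈ Finset.Icc N k,
              A.charpoly.coeff (N + r + 1 + l - k - 1) •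
                (A ^ (l - N)).mulVec (b (n - (k : ℤ) + (N : ℤ))) := by
  nontriviality R
  set K := W * fromRows (0 : Matrix (Fin N) (Fin r) R) (1 - Sr)
  set P := fromCols (0 : Matrix (Fin r) (Fin N) R) (1 : Matrix (Fin r) (Fin r) R)
  have hKP : A = K * P := hA.trans (mul_one_sub_fromBlocks_one_zero_zero W Sr)
  refine recurrence_multilevel_scheme_of_eq_X_pow_mul hrec (monic_X.mul (charpoly_monic _)) ?_
    (hKP ▸ aeval_mul_X_mul_charpoly_mul_eq_zero K P) hN ?_
  · rw [natDegree_X_mul (charpoly_monic _).ne_zero, charpoly_natDegree_eq_dim, Fintype.card_fin]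
  · rw [hKP, charpoly_mul_eq_X_pow_mul_X_mul_charpoly K P]
    simp only [Fintype.card_sum, Fintype.card_fin]
    omega
end

section
/- (Theorem 1: two equivalent GPMRT-LB models produce identical finite-difference schemes on the conservative moments.) Let R be a commutative ring, q ≥ 1, and 1 ≤ Ncons ≤ q. Let M, M₁, 𝒩 be q×q matrices over R with M and 𝒩 invertible (their determinants are units in R), M₁ = 𝒩·M, and suppose the first Ncons rows of M₁ coincide with the corresponding rows of M. Let T ∈ R^q and set W := M·diag(T)·M⁻¹, W₁ := M₁·diag(T)·M₁⁻¹. Let S be any q×q matrix over R and S₁ := 𝒩·S·𝒩⁻¹; put A := W·(I_q − S), A₁ := W₁·(I_q − S₁), B := W·S, B₁ := W₁·S₁. Then: (i) charpoly(A₁) = charpoly(A); and (ii) for every j ∈ {1,…,Ncons} and every k: ( adj(charmatrix(A₁)) · (B₁·M₁)ᶜ )_{jk} = ( adj(charmatrix(A)) · (B·M)ᶜ )_{jk} and ( adj(charmatrix(A₁)) · (W₁·M₁)ᶜ )_{jk} = ( adj(charmatrix(A)) · (W·M)ᶜ )_{jk} in R[x], where Xᶜ denotes a matrix over R viewed over R[x]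 via the constant-polynomial embedding. Consequently the first Ncons rows of the macroscopic finite-difference scheme produced by the model (M₁, S₁) coincide with those produced by (M, S). -/
/-!
The change of moments `𝒩` conjugates the whole model: `W₁ = 𝒩 W 𝒩⁻¹`, hence `A₁`, `B₁` are the
`𝒩`-conjugates of `A`, `B`, and `x·I - A₁` and its adjugate are the conjugates of `x·I - A` and of
its adjugate by the constant matrix `𝒩`. Therefore `adj(x·I - A₁)·(B₁M₁) = 𝒩·adj(x·I - A)·(BM)`
(and likewise for `W₁M₁`), and the first `Ncons` rows of `𝒩 = M₁M⁻¹` are those of the identity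
because `M₁` and `M` share them.
-/

open Matrix Polynomial

namespace Matrix

section Conj

variable {n : Type*} [Fintype n] [DecidableEq n] {α : Type*} [CommRing α]

theorem adjugate_eq_det_smul_nonsing_inv {A : Matrix n n α} (h : IsUnit A.det) :
    adjugate A = A.det • A⁻¹ :=
  calc adjugate A = A⁻¹ * (A * adjugate A) := (nonsing_inv_mul_cancel_left _ _ h).symm
    _ = A.det • A⁻¹ := by rw [mul_adjugate, Matrix.mul_smul, Matrix.mul_one]

theorem adjugate_conj {P : Matrix n n α} (h : IsUnit P.det) (N : Matrix n n α) :
    adjugate (P * N * P⁻¹) = P * adjugate N * P⁻¹ := by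
  rw [adjugate_mul_distrib, adjugate_mul_distrib, adjugate_eq_det_smul_nonsing_inv h,
    adjugate_eq_det_smul_nonsing_inv (isUnit_nonsing_inv_det P h), nonsing_inv_nonsing_inv P h,
    Matrix.smul_mul, Matrix.mul_smul, Matrix.mul_smul, smul_smul, det_nonsing_inv_mul_det P h,
    one_smul, Matrix.mul_assoc]

theorem conj_mul_conj {P : Matrix n n α} (h : IsUnit P.det) (N N' : Matrix n n α) :
    P * N * P⁻¹ * (P * N' * P⁻¹) = P * (N * N') * P⁻¹ := by
  simp only [Matrix.mul_assoc, nonsing_inv_mul_cancel_left _ _ h]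

theorem conj_mul_mul_cancel {P : Matrix n n α} (h : IsUnit P.det) (N N' : Matrix n n α) :
    P * N * P⁻¹ * (P * N') = P * (N * N') := by
  simp only [Matrix.mul_assoc, nonsing_inv_mul_cancel_left _ _ h]

theorem map_nonsing_inv {β : Type*} [CommRing β] (f : α →+* β) {P : Matrix n n α}
    (h : IsUnit P.det) : (P.map f)⁻¹ = P⁻¹.map f :=
  inv_eq_right_inv <| by
    rw [← Matrix.map_mul, mul_nonsing_inv _ h, Matrix.map_one f f.map_zero f.map_one]

theorem isUnit_det_map {β : Type*} [CommRing β] (f : α →+* β) {P : Matrix n n α}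
    (h : IsUnit P.det) : IsUnit (P.map f).det :=
  RingHom.map_det f P ▸ h.map f

theorem charmatrix_conj {P : Matrix n n α} (h : IsUnit P.det) (N : Matrix n n α) :
    charmatrix (P * N * P⁻¹) = P.map C * charmatrix N * (P.map C)⁻¹ := by
  have hC := isUnit_det_map C h
  simp only [charmatrix, RingHom.mapMatrix_apply, Matrix.mul_sub, Matrix.sub_mul,
    Matrix.map_mul, ← (scalar_commute (X : α[X]) (fun _ => mul_comm _ _) _).eq]
  rw [mul_nonsing_inv_cancel_right _ _ hC, map_nonsing_inv C h]

theorem charpoly_conj {P : Matrix n n α} (h : IsUnit P.det) (N : Matrix n n α) :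
    charpoly (P * N * P⁻¹) = charpoly N := by
  rw [charpoly, charmatrix_conj h, det_conj ((isUnit_iff_isUnit_det _).2 (isUnit_det_map C h)),
    charpoly]

end Conj

section Rows

variable {n : Type*} [Fintype n] {α : Type*} [CommRing α]

theorem row_mul_eq_of_row_eq {m p : Type*} {A B : Matrix m n α} {i : m} (hAB : A i = B i)
    (X : Matrix n p α) : (A * X) i = (B * X) i := by
  ext k; simp only [mul_apply, hAB]

theorem row_mul_eq_self_of_row_mul_eq [DecidableEq n] {N M : Matrix n n α} (hM : IsUnit M.det)
    {i : n} (h : (N * M) i = M i) {p : Type*} (Z : Matrix n p α) : (N * Z) i = Z i :=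
  calc (N * Z) i = (N * M * (M⁻¹ * Z)) i := by
        rw [Matrix.mul_assoc, mul_nonsing_inv_cancel_left _ _ hM]
    _ = (M * (M⁻¹ * Z)) i := row_mul_eq_of_row_eq h _
    _ = Z i := by rw [mul_nonsing_inv_cancel_left _ _ hM]

end Rows

end Matrix

theorem equivalent_models_same_scheme_general {R : Type*} [CommRing R] {q Ncons : ℕ}
    (M M₁ 𝒩 : Matrix (Fin q) (Fin q) R)
    (hM : IsUnit M.det) (h𝒩 : IsUnit 𝒩.det) (hM₁ : M₁ = 𝒩 * M)
    (hrows : ∀ i : Fin q, (i : ℕ) < Ncons → ∀ k : Fin q, M₁ i k = M i k)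
    (T : Fin q → R) (S : Matrix (Fin q) (Fin q) R)
    (W W₁ S₁ A A₁ B B₁ : Matrix (Fin q) (Fin q) R)
    (hW : W = M * Matrix.diagonal T * M⁻¹) (hW₁ : W₁ = M₁ * Matrix.diagonal T * M₁⁻¹)
    (hS₁ : S₁ = 𝒩 * S * 𝒩⁻¹)
    (hA : A = W * (1 - S)) (hA₁ : A₁ = W₁ * (1 - S₁))
    (hB : B = W * S) (hB₁ : B₁ = W₁ * S₁) :
    A₁.charpoly = A.charpoly
    ∧ ∀ j : Fin q, (j : ℕ) < Ncons → ∀ k : Fin q,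
        ((Matrix.charmatrix A₁).adjugate * (B₁ * M₁).map Polynomial.C :
            Matrix (Fin q) (Fin q) (Polynomial R)) j k
          = ((Matrix.charmatrix A).adjugate * (B * M).map Polynomial.C :
              Matrix (Fin q) (Fin q) (Polynomial R)) j k
        ∧ ((Matrix.charmatrix A₁).adjugate * (W₁ * M₁).map Polynomial.C :
            Matrix (Fin q) (Fin q) (Polynomial R)) j k
          = ((Matrix.charmatrix A).adjugate * (W * M).map Polynomial.C :
              Matrix (Fin q) (Fin q) (Polynomial R)) j k := by
  have hW₁' : W₁ = 𝒩 * W * 𝒩⁻¹ := by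
    rw [hW₁, hM₁, Matrix.mul_inv_rev, hW]; simp only [Matrix.mul_assoc]
  have hS₁' : 1 - S₁ = 𝒩 * (1 - S) * 𝒩⁻¹ := by
    rw [hS₁, Matrix.mul_sub, Matrix.sub_mul, Matrix.mul_one, mul_nonsing_inv _ h𝒩]
  have hA₁' : A₁ = 𝒩 * A * 𝒩⁻¹ := by rw [hA₁, hW₁', hS₁', conj_mul_conj h𝒩, hA]
  have hB₁' : B₁ = 𝒩 * B * 𝒩⁻¹ := by rw [hB₁, hW₁', hS₁, conj_mul_conj h𝒩, hB]
  refine ⟨hA₁' ▸ charpoly_conj h𝒩 A, fun j hj k => ?_⟩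
  have hrow : ∀ Z : Matrix (Fin q) (Fin q) R[X], (𝒩.map C * Z) j = Z j :=
    row_mul_eq_self_of_row_mul_eq (isUnit_det_map C hM) <| by
      rw [← Matrix.map_mul, ← hM₁]
      funext l
      simp only [map_apply, hrows j hj l]
  have hadj : ∀ G : Matrix (Fin q) (Fin q) R,
      ((charmatrix A₁).adjugate * (𝒩 * G).map C) j k = ((charmatrix A).adjugate * G.map C) j k := by
    intro G
    rw [hA₁', charmatrix_conj h𝒩, adjugate_conj (isUnit_det_map C h𝒩), Matrix.map_mul,
      conj_mul_mul_cancel (isUnit_det_map C h𝒩), hrow]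
  exact ⟨by rw [hB₁', hM₁, conj_mul_mul_cancel h𝒩, hadj],
    by rw [hW₁', hM₁, conj_mul_mul_cancel h𝒩, hadj]⟩

/-- Theorem 1: two equivalent GPMRT-LB models produce identical finite-difference schemes on
the conservative moments. With `M₁ = 𝒩·M` invertible transforms agreeing in their first
`Ncons` rows, `W = M·diag T·M⁻¹`, `W₁ = M₁·diag T·M₁⁻¹`, `S₁ = 𝒩·S·𝒩⁻¹`,
`A = W(I-S)`, `A₁ = W₁(I-S₁)`, `B = W·S`, `B₁ = W₁·S₁`:
(i) `charpoly A₁ = charpoly A`, and (ii) for every row `j < Ncons` and every `k`,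
the `(j,k)` entries of `adj(charmatrix A₁)·(B₁M₁)ᶜ` and `adj(charmatrix A)·(BM)ᶜ` agree, and
likewise with `W₁M₁` and `WM`. -/
theorem equivalent_models_same_scheme {R : Type*} [CommRing R] {q Ncons : ℕ}
    (hq : 1 ≤ q) (hN1 : 1 ≤ Ncons) (hNq : Ncons ≤ q)
    (M M₁ 𝒩 : Matrix (Fin q) (Fin q) R)
    (hM : IsUnit M.det) (h𝒩 : IsUnit 𝒩.det) (hM₁ : M₁ = 𝒩 * M)
    (hrows : ∀ i : Fin q, (i : ℕ) < Ncons → ∀ k : Fin q, M₁ i k = M i k)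
    (T : Fin q → R) (S : Matrix (Fin q) (Fin q) R)
    (W W₁ S₁ A A₁ B B₁ : Matrix (Fin q) (Fin q) R)
    (hW : W = M * Matrix.diagonal T * M⁻¹) (hW₁ : W₁ = M₁ * Matrix.diagonal T * M₁⁻¹)
    (hS₁ : S₁ = 𝒩 * S * 𝒩⁻¹)
    (hA : A = W * (1 - S)) (hA₁ : A₁ = W₁ * (1 - S₁))
    (hB : B = W * S) (hB₁ : B₁ = W₁ * S₁) :
    A₁.charpoly = A.charpoly
    ∧ ∀ j : Fin q, (j : ℕ) < Ncons → ∀ k : Fin q,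
        ((Matrix.charmatrix A₁).adjugate * (B₁ * M₁).map Polynomial.C :
            Matrix (Fin q) (Fin q) (Polynomial R)) j k
          = ((Matrix.charmatrix A).adjugate * (B * M).map Polynomial.C :
              Matrix (Fin q) (Fin q) (Polynomial R)) j k
        ∧ ((Matrix.charmatrix A₁).adjugate * (W₁ * M₁).map Polynomial.C :
            Matrix (Fin q) (Fin q) (Polynomial R)) j k
          = ((Matrix.charmatrix A).adjugate * (W * M).map Polynomial.C :
              Matrix (Fin q) (Fin q) (Polynomial R)) j k :=
  equivalent_models_same_scheme_general M M₁ 𝒩 hM h𝒩 hM₁ hrows T S W W₁ S₁ A A₁ B B₁ hW hW₁ hS₁ hA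
    hA₁ hB hB₁
end

section
/- (Theorem 2: the projected finite-difference scheme is invariant under a change of moment basis.) Let R be a commutative ring, q ≥ 1, 1 ≤ N ≤ q. Let M, M₁, 𝒩 be q×q matrices over R with M and 𝒩 invertible, M₁ = 𝒩·M, and the first N rows of M₁ equal to those of M. Let T ∈ R^q, W := M·diag(T)·M⁻¹, W₁ := M₁·diag(T)·M₁⁻¹; let S be a q×q matrix over R, S₁ := 𝒩·S·𝒩⁻¹; put A := W(I_q − S), A₁ := W₁(I_q − S₁), B := W·S, B₁ := W₁·S₁. For j ∈ {1,…,N} let P_j := Σ_{l ∈ {j} ∪ {N+1,…,q}} e_l·e_lᵀ, P_j¹ := 𝒩·P_j·𝒩⁻¹, Ã_j := A·P_j, Ã_j¹ := A₁·P_j¹, Ā_j := A − Ã_j, Ā_j¹ := A₁ − Ã_j¹. Then: (i) Ã_j¹ = 𝒩·Ã_j·𝒩⁻¹, and hence charpoly(Ã_j¹) = charpoly(Ã_j); (ii) for every k: ( adj(charmatrix(Ã_j¹)) · (Ā_j¹·𝒩)ᶜ )_{jk} = ( adj(charmatrix(Ã_j)) · Ā_jᶜ )_{jk}, ( adj(charmatrix(Ã_j¹))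 · (B₁·M₁)ᶜ )_{jk} = ( adj(charmatrix(Ã_j)) · (B·M)ᶜ )_{jk}, and ( adj(charmatrix(Ã_j¹)) · (W₁·M₁)ᶜ )_{jk} = ( adj(charmatrix(Ã_j)) · (W·M)ᶜ )_{jk} in R[x]. Consequently the finite-difference scheme on the j-th conservative moment written in the moments m^{(1)} = M₁·f of the model (M₁, S₁) coincides with the scheme of (M, S). -/
open Polynomial

namespace Matrix

theorem map_row_eq_one {n R S : Type*} [DecidableEq n] [NonAssocSemiring R] [NonAssocSemiring S]
    (f : R →+* S) {N : Matrix n n R} {i : n} (hi : N i = (1 : Matrix n n R) i) :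
    N.map f i = (1 : Matrix n n S) i := by
  rw [← Matrix.map_one f (map_zero f) (map_one f)]
  exact congrArg (f ∘ ·) hi

variable {n R : Type*} [Fintype n] [DecidableEq n] [CommRing R] {N : Matrix n n R}

theorem conj_mul_conj_s15 (hN : IsUnit N.det) (X Y : Matrix n n R) :
    N * X * N⁻¹ * (N * Y * N⁻¹) = N * (X * Y) * N⁻¹ := by
  simp only [Matrix.mul_assoc, nonsing_inv_mul_cancel_left N _ hN]

theorem conj_sub_conj (X Y : Matrix n n R) :
    N * X * N⁻¹ - N * Y * N⁻¹ = N * (X - Y) * N⁻¹ := by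
  rw [Matrix.mul_sub, Matrix.sub_mul]

theorem one_sub_conj (hN : IsUnit N.det) (X : Matrix n n R) :
    1 - N * X * N⁻¹ = N * (1 - X) * N⁻¹ := by
  rw [← conj_sub_conj, Matrix.mul_one, mul_nonsing_inv N hN]

theorem conj_mul_self (hN : IsUnit N.det) (X : Matrix n n R) :
    N * X * N⁻¹ * N = N * X := by
  rw [Matrix.mul_assoc, nonsing_inv_mul N hN, Matrix.mul_one]

theorem charpoly_conj_s15 (hN : IsUnit N.det) (X : Matrix n n R) :
    (N * X * N⁻¹).charpoly = X.charpoly := by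
  lift N to (Matrix n n R)ˣ using (isUnit_iff_isUnit_det N).mpr hN
  exact charpoly_units_conj N X

theorem adjugate_eq_det_smul_nonsing_inv_s15 (hN : IsUnit N.det) :
    adjugate N = N.det • N⁻¹ := by
  rw [nonsing_inv_apply N hN, smul_smul, hN.mul_val_inv, one_smul]

theorem adjugate_conj_s15 (hN : IsUnit N.det) (Y : Matrix n n R) :
    adjugate (N * Y * N⁻¹) = N * adjugate Y * N⁻¹ := by
  rw [adjugate_mul_distrib, adjugate_mul_distrib, adjugate_eq_det_smul_nonsing_inv_s15 hN,
    adjugate_eq_det_smul_nonsing_inv_s15 (isUnit_nonsing_inv_det N hN), nonsing_inv_nonsing_inv N hN]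
  simp only [Matrix.smul_mul, Matrix.mul_smul, smul_smul, Matrix.mul_assoc]
  rw [mul_comm, det_nonsing_inv_mul_det N hN, one_smul]

theorem map_mul_map_nonsing_inv {S : Type*} [CommRing S] (f : R →+* S) (hN : IsUnit N.det) :
    N.map f * N⁻¹.map f = 1 := by
  rw [← Matrix.map_mul, mul_nonsing_inv N hN, Matrix.map_one f (map_zero f) (map_one f)]

theorem charmatrix_conj_s15 (hN : IsUnit N.det) (X : Matrix n n R) :
    charmatrix (N * X * N⁻¹) = N.map C * charmatrix X * N⁻¹.map C := by
  rw [charmatrix, charmatrix, Matrix.mul_sub, Matrix.sub_mul,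
    ← (scalar_commute _ (Commute.all _) _).eq, Matrix.mul_assoc (scalar n _),
    map_mul_map_nonsing_inv C hN, Matrix.mul_one]
  simp only [RingHom.mapMatrix_apply, Matrix.map_mul]

theorem adjugate_charmatrix_conj_mul (hN : IsUnit N.det) (X Y : Matrix n n R) :
    adjugate (charmatrix (N * X * N⁻¹)) * (N * Y).map C
      = N.map C * (adjugate (charmatrix X) * Y.map C) := by
  have hNC : IsUnit (N.map (C : R →+* R[X])).det :=
    isUnit_det_of_right_inverse (map_mul_map_nonsing_inv C hN)
  rw [charmatrix_conj_s15 hN, ← inv_eq_right_inv (map_mul_map_nonsing_inv C hN), adjugate_conj_s15 hNC,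
    Matrix.map_mul, ← Matrix.mul_assoc, conj_mul_self hNC, Matrix.mul_assoc]

theorem mul_apply_of_row_eq_one {i : n} (hi : N i = (1 : Matrix n n R) i)
    (Z : Matrix n n R) (k : n) : (N * Z) i k = Z i k := by
  rw [mul_apply_eq_vecMul, hi, ← mul_apply_eq_vecMul, Matrix.one_mul]

theorem row_eq_one_of_mul_row_eq {M : Matrix n n R} (hM : IsUnit M.det) {i : n}
    (hi : (N * M) i = M i) : N i = (1 : Matrix n n R) i := by
  rw [← mul_nonsing_inv_cancel_right M N hM, mul_apply_eq_vecMul, hi, ← mul_apply_eq_vecMul,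
    mul_nonsing_inv M hM]

theorem adjugate_charmatrix_conj_mul_apply_of_row_eq_one (hN : IsUnit N.det)
    {i : n} (hi : N i = (1 : Matrix n n R) i) (X Y : Matrix n n R) (k : n) :
    (adjugate (charmatrix (N * X * N⁻¹)) * (N * Y).map C) i k
      = (adjugate (charmatrix X) * Y.map C) i k := by
  rw [adjugate_charmatrix_conj_mul hN, mul_apply_of_row_eq_one (map_row_eq_one C hi)]

end Matrix

theorem projected_scheme_basis_invariant_general {R : Type*} [CommRing R] {q N : ℕ}
    (M M₁ 𝒩 : Matrix (Fin q) (Fin q) R)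
    (hM : IsUnit M.det) (h𝒩 : IsUnit 𝒩.det) (hM₁ : M₁ = 𝒩 * M)
    (hrows : ∀ i : Fin q, (i : ℕ) < N → ∀ k : Fin q, M₁ i k = M i k)
    (T : Fin q → R) (S : Matrix (Fin q) (Fin q) R)
    (W W₁ S₁ A A₁ B B₁ : Matrix (Fin q) (Fin q) R)
    (hW : W = M * Matrix.diagonal T * M⁻¹) (hW₁ : W₁ = M₁ * Matrix.diagonal T * M₁⁻¹)
    (hS₁ : S₁ = 𝒩 * S * 𝒩⁻¹)
    (hA : A = W * (1 - S)) (hA₁ : A₁ = W₁ * (1 - S₁))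
    (hB : B = W * S) (hB₁ : B₁ = W₁ * S₁)
    (j : Fin q) (hj : (j : ℕ) < N)
    (P P₁ Atil Atil₁ Abar Abar₁ : Matrix (Fin q) (Fin q) R)
    (hP₁ : P₁ = 𝒩 * P * 𝒩⁻¹)
    (hAtil : Atil = A * P) (hAtil₁ : Atil₁ = A₁ * P₁)
    (hAbar : Abar = A - Atil) (hAbar₁ : Abar₁ = A₁ - Atil₁) :
    (Atil₁ = 𝒩 * Atil * 𝒩⁻¹ ∧ Atil₁.charpoly = Atil.charpoly)
    ∧ ∀ k : Fin q,
        ((Matrix.charmatrix Atil₁).adjugate * (Abar₁ * 𝒩).map Polynomial.C :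
            Matrix (Fin q) (Fin q) (Polynomial R)) j k
          = ((Matrix.charmatrix Atil).adjugate * Abar.map Polynomial.C :
              Matrix (Fin q) (Fin q) (Polynomial R)) j k
        ∧ ((Matrix.charmatrix Atil₁).adjugate * (B₁ * M₁).map Polynomial.C :
            Matrix (Fin q) (Fin q) (Polynomial R)) j k
          = ((Matrix.charmatrix Atil).adjugate * (B * M).map Polynomial.C :
              Matrix (Fin q) (Fin q) (Polynomial R)) j k
        ∧ ((Matrix.charmatrix Atil₁).adjugate * (W₁ * M₁).map Polynomial.C :
            Matrix (Fin q) (Fin q) (Polynomial R)) j k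
          = ((Matrix.charmatrix Atil).adjugate * (W * M).map Polynomial.C :
              Matrix (Fin q) (Fin q) (Polynomial R)) j k := by
  have hW₁' : W₁ = 𝒩 * W * 𝒩⁻¹ := by
    rw [hW₁, hM₁, Matrix.mul_inv_rev, hW]
    simp only [Matrix.mul_assoc]
  have hA₁' : A₁ = 𝒩 * A * 𝒩⁻¹ := by
    rw [hA₁, hW₁', hS₁, Matrix.one_sub_conj h𝒩, Matrix.conj_mul_conj_s15 h𝒩, hA]
  have hAtil₁' : Atil₁ = 𝒩 * Atil * 𝒩⁻¹ := by
    rw [hAtil₁, hA₁', hP₁, Matrix.conj_mul_conj_s15 h𝒩, hAtil]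
  have hAbar₁' : Abar₁ * 𝒩 = 𝒩 * Abar := by
    rw [hAbar₁, hA₁', hAtil₁', Matrix.conj_sub_conj, Matrix.conj_mul_self h𝒩, hAbar]
  have hBM : B₁ * M₁ = 𝒩 * (B * M) := by
    rw [hB₁, hW₁', hS₁, Matrix.conj_mul_conj_s15 h𝒩, hM₁, ← Matrix.mul_assoc,
      Matrix.conj_mul_self h𝒩, hB, Matrix.mul_assoc]
  have hWM : W₁ * M₁ = 𝒩 * (W * M) := by
    rw [hW₁', hM₁, ← Matrix.mul_assoc, Matrix.conj_mul_self h𝒩, Matrix.mul_assoc]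
  have hrow : 𝒩 j = (1 : Matrix (Fin q) (Fin q) R) j :=
    Matrix.row_eq_one_of_mul_row_eq hM (by rw [← hM₁]; exact funext (hrows j hj))
  refine ⟨⟨hAtil₁', by rw [hAtil₁', Matrix.charpoly_conj_s15 h𝒩]⟩, fun k => ⟨?_, ?_, ?_⟩⟩
  all_goals rw [hAtil₁']
  · rw [hAbar₁', Matrix.adjugate_charmatrix_conj_mul_apply_of_row_eq_one h𝒩 hrow]
  · rw [hBM, Matrix.adjugate_charmatrix_conj_mul_apply_of_row_eq_one h𝒩 hrow]
  · rw [hWM, Matrix.adjugate_charmatrix_conj_mul_apply_of_row_eq_one h𝒩 hrow]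

/-- Theorem 2: the projected finite-difference scheme is invariant under a change of moment
basis. With `M₁ = 𝒩·M` agreeing with `M` in the first `N` rows, `W = M·diag T·M⁻¹`,
`W₁ = M₁·diag T·M₁⁻¹`, `S₁ = 𝒩·S·𝒩⁻¹`, `A = W(I-S)`, `A₁ = W₁(I-S₁)`, `B = W·S`,
`B₁ = W₁·S₁`, `P₁ = 𝒩·P·𝒩⁻¹`, `Atil = A·P` (= Ã_j), `Atil₁ = A₁·P₁` (= Ã_j¹),
`Abar = A - Atil` (= Ā_j), `Abar₁ = A₁ - Atil₁` (= Ā_j¹):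
(i) `Atil₁ = 𝒩·Atil·𝒩⁻¹` and `charpoly(Atil₁) = charpoly(Atil)`;
(ii) for every `k`, the `(j,k)` entries of `adj(charmatrix Atil₁)·(Abar₁𝒩)ᶜ` and
`adj(charmatrix Atil)·Abarᶜ` agree, and likewise for `(B₁M₁)ᶜ` vs `(BM)ᶜ` and
`(W₁M₁)ᶜ` vs `(WM)ᶜ`. -/
theorem projected_scheme_basis_invariant {R : Type*} [CommRing R] {q N : ℕ}
    (hq : 1 ≤ q) (hN1 : 1 ≤ N) (hNq : N ≤ q)
    (M M₁ 𝒩 : Matrix (Fin q) (Fin q) R)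
    (hM : IsUnit M.det) (h𝒩 : IsUnit 𝒩.det) (hM₁ : M₁ = 𝒩 * M)
    (hrows : ∀ i : Fin q, (i : ℕ) < N → ∀ k : Fin q, M₁ i k = M i k)
    (T : Fin q → R) (S : Matrix (Fin q) (Fin q) R)
    (W W₁ S₁ A A₁ B B₁ : Matrix (Fin q) (Fin q) R)
    (hW : W = M * Matrix.diagonal T * M⁻¹) (hW₁ : W₁ = M₁ * Matrix.diagonal T * M₁⁻¹)
    (hS₁ : S₁ = 𝒩 * S * 𝒩⁻¹)
    (hA : A = W * (1 - S)) (hA₁ : A₁ = W₁ * (1 - S₁))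
    (hB : B = W * S) (hB₁ : B₁ = W₁ * S₁)
    (j : Fin q) (hj : (j : ℕ) < N)
    (P P₁ Atil Atil₁ Abar Abar₁ : Matrix (Fin q) (Fin q) R)
    (hP : P = gpmfdProj R N j) (hP₁ : P₁ = 𝒩 * P * 𝒩⁻¹)
    (hAtil : Atil = A * P) (hAtil₁ : Atil₁ = A₁ * P₁)
    (hAbar : Abar = A - Atil) (hAbar₁ : Abar₁ = A₁ - Atil₁) :
    (Atil₁ = 𝒩 * Atil * 𝒩⁻¹ ∧ Atil₁.charpoly = Atil.charpoly)
    ∧ ∀ k : Fin q,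
        ((Matrix.charmatrix Atil₁).adjugate * (Abar₁ * 𝒩).map Polynomial.C :
            Matrix (Fin q) (Fin q) (Polynomial R)) j k
          = ((Matrix.charmatrix Atil).adjugate * Abar.map Polynomial.C :
              Matrix (Fin q) (Fin q) (Polynomial R)) j k
        ∧ ((Matrix.charmatrix Atil₁).adjugate * (B₁ * M₁).map Polynomial.C :
            Matrix (Fin q) (Fin q) (Polynomial R)) j k
          = ((Matrix.charmatrix Atil).adjugate * (B * M).map Polynomial.C :
              Matrix (Fin q) (Fin q) (Polynomial R)) j k
        ∧ ((Matrix.charmatrix Atil₁).adjugate * (W₁ * M₁).map Polynomial.C :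
            Matrix (Fin q) (Fin q) (Polynomial R)) j k
          = ((Matrix.charmatrix Atil).adjugate * (W * M).map Polynomial.C :
              Matrix (Fin q) (Fin q) (Polynomial R)) j k :=
  projected_scheme_basis_invariant_general M M₁ 𝒩 hM h𝒩 hM₁ hrows T S W W₁ S₁ A A₁ B B₁ hW hW₁ hS₁
    hA hA₁ hB hB₁ j hj P P₁ Atil Atil₁ Abar Abar₁ hP₁ hAtil hAtil₁ hAbar hAbar₁
end

section
/- (Corollary 2: the scheme on the j-th conservative moment is independent of the relaxation entries in the first N columns of a block-lower-triangular relaxation matrix.) Let R be a commutative ring, q ≥ 1, 1 ≤ N ≤ q, j ∈ {1,…,N}, and W a q×q matrix over R. Let S and S′ be q×q matrices over R such that: (a) S_{il} = 0 and S′_{il} = 0 whenever l ≤ N and i < l, and whenever i ≤ N and l > N (block-lower-triangular shape as in the paper); and (b) S_{il} = S′_{il} whenever l > N (the two matrices agree in all columns beyond the N-th). Put A(·) := W·(I_q − ·), B(·) := W·(·), and Ã_j(·) := A(·)·P_j with P_j := Σ_{l ∈ {j} ∪ {N+1,…,q}} e_l·e_lᵀ. Then: (1) for every k, adj(charmatrix(Ã_j(S)))_{jk}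 = adj(charmatrix(Ã_j(S′)))_{jk} in R[x]; (2) charpoly(Ã_j(S)) − ( adj(charmatrix(Ã_j(S))) · B(S)ᶜ )_{jj} = charpoly(Ã_j(S′)) − ( adj(charmatrix(Ã_j(S′))) · B(S′)ᶜ )_{jj}; and (3) for every k ∈ {N+1,…,q}, ( adj(charmatrix(Ã_j(S))) · B(S)ᶜ )_{jk} = ( adj(charmatrix(Ã_j(S′))) · B(S′)ᶜ )_{jk}. Consequently the finite-difference scheme on the j-th conservative moment does not depend on the relaxation entries S_{il} with l ∈ {1,…,N}. -/
open Polynomial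

namespace Matrix

variable {n R : Type*} [DecidableEq n] [Fintype n] [CommRing R]

theorem adjugate_apply_eq_of_forall_ne_col {A B : Matrix n n R} {j : n}
    (h : ∀ i, ∀ l ≠ j, A i l = B i l) (k : n) :
    A.adjugate j k = B.adjugate j k := by
  have adjugate_eq_det_updateCol : ∀ M : Matrix n n R,
      M.adjugate j k = (M.updateCol j (Pi.single k 1)).det := by
    intro M
    rw [← transpose_apply M.adjugate, adjugate_transpose, adjugate_apply,
      updateRow_transpose, det_transpose]
  rw [adjugate_eq_det_updateCol, adjugate_eq_det_updateCol]
  congr 1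
  ext i l
  by_cases hl : l = j
  · simp [hl]
  · rw [updateCol_ne hl, updateCol_ne hl, h i l hl]

theorem charmatrix_adjugate_apply_eq_of_forall_ne_col {A B : Matrix n n R} {j : n}
    (h : ∀ i, ∀ l ≠ j, A i l = B i l) (k : n) :
    A.charmatrix.adjugate j k = B.charmatrix.adjugate j k :=
  adjugate_apply_eq_of_forall_ne_col
    (fun i l hl => by rw [charmatrix_apply, charmatrix_apply, h i l hl]) k

theorem charpoly_sub_charmatrix_adjugate_mul_map_C_apply_self (A B : Matrix n n R) (j : n) :
    A.charpoly - (A.charmatrix.adjugate * B.map C) j j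
      = (A.charmatrix.adjugate * (A + B).charmatrix) j j := by
  have charmatrix_add : (A + B).charmatrix = A.charmatrix - B.map C := by
    ext i l
    simp only [charmatrix_apply, Matrix.add_apply, Matrix.sub_apply, map_apply, C_add, sub_sub]
  rw [charmatrix_add, Matrix.mul_sub, adjugate_mul, Matrix.sub_apply, Matrix.smul_apply, one_apply_eq,
    smul_eq_mul, mul_one, charpoly]

omit [DecidableEq n] in
theorem mul_apply_eq_of_col_eq (W : Matrix n n R) {S S' : Matrix n n R} {l : n}
    (h : ∀ m, S m l = S' m l) (i : n) : (W * S) i l = (W * S') i l := by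
  simp only [mul_apply, h]

end Matrix

open Matrix

section gpmfdProj

variable {R : Type*} [CommRing R] {q N : ℕ}

theorem mul_gpmfdProj_apply (A : Matrix (Fin q) (Fin q) R) (j i l : Fin q) :
    (A * gpmfdProj R N j) i l = if l = j ∨ N ≤ (l : ℕ) then A i l else 0 := by
  rw [gpmfdProj, mul_diagonal]
  split_ifs <;> simp

theorem mul_one_sub_mul_gpmfdProj_add_mul_apply_self (W S : Matrix (Fin q) (Fin q) R)
    (j i : Fin q) : (W * (1 - S) * gpmfdProj R N j + W * S) i j = W i j := by
  rw [Matrix.add_apply, mul_gpmfdProj_apply, if_pos (Or.inl rfl), Matrix.mul_sub, mul_one,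
    Matrix.sub_apply, sub_add_cancel]

end gpmfdProj

theorem scheme_independent_of_lower_block_general {R : Type*} [CommRing R] {q N : ℕ}
    (j : Fin q)
    (W S S' : Matrix (Fin q) (Fin q) R)
    (hSagree : ∀ i l : Fin q, N ≤ (l : ℕ) → S i l = S' i l) :
    (∀ k : Fin q,
      (Matrix.charmatrix (W * (1 - S) * gpmfdProj R N j)).adjugate j k
        = (Matrix.charmatrix (W * (1 - S') * gpmfdProj R N j)).adjugate j k)
    ∧ ((W * (1 - S) * gpmfdProj R N j).charpoly
        - ((Matrix.charmatrix (W * (1 - S) * gpmfdProj R N j)).adjugate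
            * (W * S).map Polynomial.C : Matrix (Fin q) (Fin q) (Polynomial R)) j j
      = (W * (1 - S') * gpmfdProj R N j).charpoly
        - ((Matrix.charmatrix (W * (1 - S') * gpmfdProj R N j)).adjugate
            * (W * S').map Polynomial.C : Matrix (Fin q) (Fin q) (Polynomial R)) j j)
    ∧ ∀ k : Fin q, N ≤ (k : ℕ) →
        ((Matrix.charmatrix (W * (1 - S) * gpmfdProj R N j)).adjugate
            * (W * S).map Polynomial.C : Matrix (Fin q) (Fin q) (Polynomial R)) j k
          = ((Matrix.charmatrix (W * (1 - S') * gpmfdProj R N j)).adjugate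
              * (W * S').map Polynomial.C : Matrix (Fin q) (Fin q) (Polynomial R)) j k := by
  have hB : ∀ l : Fin q, N ≤ (l : ℕ) → ∀ i, (W * S) i l = (W * S') i l :=
    fun l hl => mul_apply_eq_of_col_eq W fun m => hSagree m l hl
  have hA : ∀ i, ∀ l ≠ j,
      (W * (1 - S) * gpmfdProj R N j) i l = (W * (1 - S') * gpmfdProj R N j) i l := by
    intro i l hlj
    simp only [mul_gpmfdProj_apply, Matrix.mul_sub, mul_one, Matrix.sub_apply]
    split_ifs with hl
    · rw [hB l (hl.resolve_left hlj) i]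
    · rfl
  have hadj := charmatrix_adjugate_apply_eq_of_forall_ne_col hA
  refine ⟨hadj, ?_, fun k hk => ?_⟩
  · rw [charpoly_sub_charmatrix_adjugate_mul_map_C_apply_self,
      charpoly_sub_charmatrix_adjugate_mul_map_C_apply_self, mul_apply, mul_apply]
    refine Finset.sum_congr rfl fun m _ => ?_
    rw [hadj m, charmatrix_apply, charmatrix_apply,
      mul_one_sub_mul_gpmfdProj_add_mul_apply_self,
      mul_one_sub_mul_gpmfdProj_add_mul_apply_self]
  · rw [mul_apply, mul_apply]
    refine Finset.sum_congr rfl fun m _ => ?_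
    rw [hadj m, map_apply, map_apply, hB k hk m]

/-- Corollary 2: the scheme on the `j`-th conservative moment is independent of the
relaxation entries in the first `N` columns of a block-lower-triangular relaxation matrix.
Indices are 0-based: `S i l = 0` whenever (`(l:ℕ) < N` and `(i:ℕ) < (l:ℕ)`) or
(`(i:ℕ) < N` and `N ≤ (l:ℕ)`), `S` and `S'` agree in all columns `l` with `N ≤ (l:ℕ)`, and
`Ã_j(S) = W(I-S)·P_j`, `B(S) = W·S`. -/
theorem scheme_independent_of_lower_block {R : Type*} [CommRing R] {q N : ℕ}
    (hq : 1 ≤ q) (hN1 : 1 ≤ N) (hNq : N ≤ q) (j : Fin q) (hj : (j : ℕ) < N)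
    (W S S' : Matrix (Fin q) (Fin q) R)
    (hSshape : ∀ i l : Fin q,
      (((l : ℕ) < N ∧ (i : ℕ) < (l : ℕ)) ∨ ((i : ℕ) < N ∧ N ≤ (l : ℕ))) →
        S i l = 0 ∧ S' i l = 0)
    (hSagree : ∀ i l : Fin q, N ≤ (l : ℕ) → S i l = S' i l) :
    (∀ k : Fin q,
      (Matrix.charmatrix (W * (1 - S) * gpmfdProj R N j)).adjugate j k
        = (Matrix.charmatrix (W * (1 - S') * gpmfdProj R N j)).adjugate j k)
    ∧ ((W * (1 - S) * gpmfdProj R N j).charpoly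
        - ((Matrix.charmatrix (W * (1 - S) * gpmfdProj R N j)).adjugate
            * (W * S).map Polynomial.C : Matrix (Fin q) (Fin q) (Polynomial R)) j j
      = (W * (1 - S') * gpmfdProj R N j).charpoly
        - ((Matrix.charmatrix (W * (1 - S') * gpmfdProj R N j)).adjugate
            * (W * S').map Polynomial.C : Matrix (Fin q) (Fin q) (Polynomial R)) j j)
    ∧ ∀ k : Fin q, N ≤ (k : ℕ) →
        ((Matrix.charmatrix (W * (1 - S) * gpmfdProj R N j)).adjugate
            * (W * S).map Polynomial.C : Matrix (Fin q) (Fin q) (Polynomial R)) j k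
          = ((Matrix.charmatrix (W * (1 - S') * gpmfdProj R N j)).adjugate
              * (W * S').map Polynomial.C : Matrix (Fin q) (Fin q) (Polynomial R)) j k :=
  scheme_independent_of_lower_block_general j W S S' hSagree
end
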